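/- arXiv:0806.3249 — 4 statements merged into one kernel-verified Lean document; each statement's English description precedes it below -/
import Mathlib

section
/- Let G = (V,E) be a finite simple graph with n vertices and c connected components, and let v : E → ℝ satisfy −2 ≤ v_e ≤ 0 for every edge e. Then C_G^{[k]}(v) = 0 for 1 ≤ k < c, (−1)^{n−k} C_G^{[k]}(v) ≥ 0 for c ≤ k ≤ n, and C_G^{[n]}(v) = 1. Moreover, if −2 < v_e < 0 for every edge e, then (−1)^{n−k} C_G^{[k]}(v) > 0 for all c ≤ k ≤ n. -/
open Finset

/-- The number of connected components of the spanning subgraph of a finite graph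
with edge set `A`. -/
noncomputable def numCompOfEdges {V : Type*} [Fintype V] (A : Finset (Sym2 V)) : ℕ :=
  Nat.card (SimpleGraph.fromEdgeSet (A : Set (Sym2 V))).ConnectedComponent

/-- The coefficient `C_G^{[k]}(v) = ∑_{A ⊆ E, k(A) = k} ∏_{e ∈ A} v_e` of `q^k` in the
multivariate Tutte polynomial `Z_G(q,v)`. -/
noncomputable def tutteCoeff {V : Type*} [Fintype V] [DecidableEq V] (G : SimpleGraph V)
    [DecidableRel G.Adj] (k : ℕ) (v : Sym2 V → ℝ) : ℝ :=
  ∑ A ∈ G.edgeFinset.powerset.filter (fun A => numCompOfEdges A = k), ∏ e ∈ A, v e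

/-!
Deletion–contraction, applied to a whole class `P` of parallel edges at once:
`C^{[k]}(E) = C^{[k]}(E ∖ P) + (∏_{e ∈ P} (1 + v_e) - 1) · C^{[k]}((E ∖ P) / P)`, where the
contraction merges the two ends of `P` and so has one vertex fewer. For `-2 ≤ v_e ≤ 0` every
factor `1 + v_e` lies in `[-1, 1]`, so the weight `∏ (1 + v_e) - 1` is `≤ 0` (and `< 0` under
the strict bounds), and the sign `(-1)^{n-k}` of both terms follows by induction on the number of
edges. Contraction creates parallel edges, so the induction runs over multigraphs.
-/

namespace SimpleGraph

variable {V W : Type*} {G : SimpleGraph V} {H : SimpleGraph W}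

theorem Reachable.apply_of_forall_adj {f : V → W}
    (hf : ∀ a b, G.Adj a b → H.Reachable (f a) (f b)) {a b : V} (h : G.Reachable a b) :
    H.Reachable (f a) (f b) := by
  rw [reachable_eq_reflTransGen] at *
  exact h.lift' f hf

def connectedComponentEquivOfReachable (f : V → W) (g : W → V)
    (hf : ∀ a b, G.Adj a b → H.Reachable (f a) (f b))
    (hg : ∀ a b, H.Adj a b → G.Reachable (g a) (g b))
    (hgf : ∀ a, G.Reachable (g (f a)) a) (hfg : ∀ b, H.Reachable (f (g b)) b) :
    G.ConnectedComponent ≃ H.ConnectedComponent where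
  toFun := Quot.map f fun _ _ => Reachable.apply_of_forall_adj hf
  invFun := Quot.map g fun _ _ => Reachable.apply_of_forall_adj hg
  left_inv C := C.ind fun a => ConnectedComponent.sound (hgf a)
  right_inv C := C.ind fun b => ConnectedComponent.sound (hfg b)

theorem reachable_fromEdgeSet_of_mem {s : Set (Sym2 V)} {a b : V} (h : s(a, b) ∈ s) :
    (fromEdgeSet s).Reachable a b := by
  rw [reachable_fromEdgeSet_eq_reflTransGen_toRel]
  exact .single h

end SimpleGraph

theorem Fintype.card_subtype_ne {V : Type*} [Fintype V] [DecidableEq V] (y : V) :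
    Fintype.card {z : V // z ≠ y} = Fintype.card V - 1 := by
  simp [Fintype.card_subtype_compl]

theorem Finset.sum_powerset_union {α M : Type*} [DecidableEq α] [AddCommMonoid M]
    {s t : Finset α} (h : Disjoint s t) (f : Finset α → M) :
    ∑ A ∈ (s ∪ t).powerset, f A = ∑ S ∈ s.powerset, ∑ T ∈ t.powerset, f (S ∪ T) := by
  have hA {A : Finset α} (hA : A ∈ (s ∪ t).powerset) : A ∩ s ∪ A ∩ t = A := by
    rw [← inter_union_distrib_left, inter_eq_left.2 (mem_powerset.1 hA)]
  rw [← sum_product']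
  refine sum_nbij' (fun A => (A ∩ s, A ∩ t)) (fun p => p.1 ∪ p.2) (by simp) ?_
    (fun A h => hA h) ?_ (fun A h => by rw [hA h])
  · simp only [mem_product, mem_powerset, and_imp, Prod.forall]
    exact fun S T hS hT => union_subset_union hS hT
  · simp only [mem_product, mem_powerset, and_imp, Prod.forall, Prod.mk.injEq]
    intro S T hS hT
    constructor
    · rw [union_inter_distrib_right, inter_eq_left.2 hS,
        disjoint_iff_inter_eq_empty.1 (h.symm.mono_left hT), union_empty]
    · rw [union_inter_distrib_right, inter_eq_left.2 hT,
        disjoint_iff_inter_eq_empty.1 (h.mono_left hS), empty_union]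

theorem Finset.image_union_of_forall_eq {α β : Type*} [DecidableEq α] [DecidableEq β]
    {f : α → β} {b : β} {s t : Finset α} (hs : s.Nonempty) (h : ∀ a ∈ s, f a = b) :
    (s ∪ t).image f = insert b (t.image f) := by
  rw [image_union, image_congr h, image_const hs, insert_eq]

theorem prod_one_add_le_one {ι R : Type*} [CommRing R] [LinearOrder R] [IsStrictOrderedRing R]
    {s : Finset ι} {v : ι → R} (hv : ∀ i ∈ s, v i ∈ Set.Icc (-2) 0) :
    ∏ i ∈ s, (1 + v i) ≤ 1 :=
  (le_abs_self _).trans <| (abs_prod s _).trans_le <| prod_le_one (fun _ _ => abs_nonneg _)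
    fun i hi => abs_le.2 ⟨by linarith [(hv i hi).1], by linarith [(hv i hi).2]⟩

theorem prod_one_add_lt_one {ι R : Type*} [CommRing R] [LinearOrder R] [IsStrictOrderedRing R]
    {s : Finset ι} {v : ι → R} {j : ι} (hj : j ∈ s)
    (hv : ∀ i ∈ s, v i ∈ Set.Ioo (-2) 0) : ∏ i ∈ s, (1 + v i) < 1 :=
  calc ∏ i ∈ s, (1 + v i) ≤ ∏ i ∈ s, |1 + v i| := (le_abs_self _).trans (abs_prod s _).le
    _ ≤ ∏ i ∈ {j}, |1 + v i| :=
      prod_le_prod_of_subset_of_le_one (singleton_subset_iff.2 hj) (fun _ _ => abs_nonneg _)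
        fun i hi _ => abs_le.2 ⟨by linarith [(hv i hi).1], by linarith [(hv i hi).2]⟩
    _ < 1 := by
      rw [prod_singleton]
      exact abs_lt.2 ⟨by linarith [(hv j hj).1], by linarith [(hv j hj).2]⟩

open SimpleGraph

section MergeVertex

variable {V : Type*} [DecidableEq V] {x y : V}

/-- The vertex map of the contraction of the edge `s(x, y)`: `y` is merged into `x`. -/
def mergeVertex (hxy : x ≠ y) (z : V) : {z : V // z ≠ y} :=
  if h : z = y then ⟨x, hxy⟩ else ⟨z, h⟩

theorem mergeVertex_coe (hxy : x ≠ y) (z : {z : V // z ≠ y}) : mergeVertex hxy z = z := by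
  simp [mergeVertex, z.2]

theorem mergeVertex_eq_mergeVertex_iff (hxy : x ≠ y) {a b : V} :
    mergeVertex hxy a = mergeVertex hxy b ↔ a = b ∨ s(a, b) = s(x, y) := by
  unfold mergeVertex
  split_ifs <;> simp [Subtype.ext_iff] <;> grind

theorem not_isDiag_map_mergeVertex (hxy : x ≠ y) {e : Sym2 V} (he : ¬e.IsDiag)
    (hne : e ≠ s(x, y)) : ¬(e.map (mergeVertex hxy)).IsDiag := by
  induction e using Sym2.ind
  simp_all [mergeVertex_eq_mergeVertex_iff]

end MergeVertex

section Components

variable {V : Type*} [Fintype V]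

theorem numCompOfEdges_le_card (A : Finset (Sym2 V)) : numCompOfEdges A ≤ Fintype.card V :=
  Nat.card_eq_fintype_card (α := V) ▸ Nat.card_le_card_of_surjective _ Quot.mk_surjective

theorem numCompOfEdges_empty : numCompOfEdges (∅ : Finset (Sym2 V)) = Fintype.card V := by
  rw [numCompOfEdges, coe_empty, fromEdgeSet_empty, ← Nat.card_eq_fintype_card]
  refine (Nat.card_eq_of_bijective _ ⟨fun a b h => ?_, Quot.mk_surjective⟩).symm
  exact reachable_bot.1 (ConnectedComponent.exact h)

theorem numCompOfEdges_anti {A B : Finset (Sym2 V)} (h : A ⊆ B) :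
    numCompOfEdges B ≤ numCompOfEdges A :=
  Nat.card_le_card_of_surjective _ <|
    ConnectedComponent.surjective_map_ofLE (fromEdgeSet_mono (coe_subset.2 h))

variable [DecidableEq V] {x y : V}

theorem numCompOfEdges_image_map_mergeVertex (hxy : x ≠ y) (B : Finset (Sym2 V)) :
    numCompOfEdges (B.image (Sym2.map (mergeVertex hxy))) =
      numCompOfEdges (insert s(x, y) B) := by
  set G := fromEdgeSet ((insert s(x, y) B : Finset (Sym2 V)) : Set (Sym2 V))
  have hreach (z : V) : G.Reachable (mergeVertex hxy z) z := by
    by_cases hz : z = y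
    · subst hz
      simpa [mergeVertex] using reachable_fromEdgeSet_of_mem (by simp)
    · simp [mergeVertex, hz]
  refine Nat.card_congr (connectedComponentEquivOfReachable Subtype.val (mergeVertex hxy)
    (fun a b hab => ?_) (fun a b hab => ?_) (fun z => by rw [mergeVertex_coe]) hreach)
  · obtain ⟨hab, -⟩ := (fromEdgeSet_adj _).1 hab
    obtain ⟨e, he, hea⟩ := mem_image.1 hab
    induction e using Sym2.ind with | _ c d
    rw [Sym2.map_mk, Sym2.eq_iff] at hea
    have hcd : G.Reachable c d := reachable_fromEdgeSet_of_mem (by simp [he])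
    rcases hea with ⟨rfl, rfl⟩ | ⟨rfl, rfl⟩
    · exact ((hreach c).trans hcd).trans (hreach d).symm
    · exact ((hreach d).trans hcd.symm).trans (hreach c).symm
  · obtain ⟨hab, -⟩ := (fromEdgeSet_adj _).1 hab
    rcases mem_insert.1 hab with h | h
    · rw [(mergeVertex_eq_mergeVertex_iff hxy).2 (Or.inr h)]
    · exact reachable_fromEdgeSet_of_mem (mem_image_of_mem _ h)

theorem numCompOfEdges_lt_card {A : Finset (Sym2 V)} {e : Sym2 V} (he : e ∈ A)
    (hd : ¬e.IsDiag) : numCompOfEdges A < Fintype.card V := by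
  induction e using Sym2.ind with | _ x y
  have hxy : x ≠ y := by simpa using hd
  calc numCompOfEdges A ≤ numCompOfEdges (insert s(x, y) ∅) :=
        numCompOfEdges_anti (by simpa using he)
    _ = Fintype.card {z : V // z ≠ y} := by
        rw [← numCompOfEdges_image_map_mergeVertex hxy, image_empty, numCompOfEdges_empty]
    _ < Fintype.card V := Fintype.card_subtype_lt (p := (· ≠ y)) (x := y) (by simp)

end Components

section MultiTutteCoeff

variable {V ι R : Type*} [Fintype V] [DecidableEq V]

/-- `C^{[k]}` for the multigraph on `V` whose edges are the elements `i ∈ E`, the edge `i`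
joining the ends `ends i`; parallel edges are allowed. -/
noncomputable def multiTutteCoeff [CommSemiring R] (ends : ι → Sym2 V) (E : Finset ι) (k : ℕ)
    (v : ι → R) : R :=
  ∑ A ∈ E.powerset with numCompOfEdges (A.image ends) = k, ∏ i ∈ A, v i

theorem tutteCoeff_eq_multiTutteCoeff (G : SimpleGraph V) [DecidableRel G.Adj] (k : ℕ)
    (v : Sym2 V → ℝ) : tutteCoeff G k v = multiTutteCoeff id G.edgeFinset k v := by
  simp [tutteCoeff, multiTutteCoeff]

section CommSemiring

variable [CommSemiring R] (ends : ι → Sym2 V) (E : Finset ι) (v : ι → R) {k : ℕ}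

theorem multiTutteCoeff_eq_zero_of_lt (hk : k < numCompOfEdges (E.image ends)) :
    multiTutteCoeff ends E k v = 0 := by
  refine sum_eq_zero fun A hA => absurd hk ?_
  rw [mem_filter, mem_powerset] at hA
  exact not_lt.2 (hA.2 ▸ numCompOfEdges_anti (image_subset_image hA.1))

theorem multiTutteCoeff_card (hE : ∀ i ∈ E, ¬(ends i).IsDiag) :
    multiTutteCoeff ends E (Fintype.card V) v = 1 := by
  have : {A ∈ E.powerset | numCompOfEdges (A.image ends) = Fintype.card V} = {∅} := by
    ext A
    simp only [mem_filter, mem_powerset, mem_singleton]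
    refine ⟨fun ⟨hAE, hA⟩ => ?_, fun hA =>
      ⟨hA ▸ empty_subset E, by simp [hA, numCompOfEdges_empty]⟩⟩
    by_contra hne
    obtain ⟨i, hi⟩ := nonempty_iff_ne_empty.2 hne
    exact (numCompOfEdges_lt_card (mem_image_of_mem ends hi) (hE i (hAE hi))).ne hA
  rw [multiTutteCoeff, this, sum_singleton, prod_empty]

end CommSemiring

variable [DecidableEq ι] {x y : V}

/-- A nonempty set of edges parallel to `s(x, y)` connects exactly what `s(x, y)` connects,
which is where the weight `∏ (1 + v i) - 1` of the contracted term comes from. -/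
theorem multiTutteCoeff_eq_delete_add_contract [CommRing R] (ends : ι → Sym2 V) (E : Finset ι)
    (hxy : x ≠ y) (k : ℕ) (v : ι → R) :
    multiTutteCoeff ends E k v =
      multiTutteCoeff ends {i ∈ E | ends i ≠ s(x, y)} k v +
        ((∏ i ∈ E with ends i = s(x, y), (1 + v i)) - 1) *
          multiTutteCoeff (Sym2.map (mergeVertex hxy) ∘ ends)
            {i ∈ E | ends i ≠ s(x, y)} k v := by
  set P := {i ∈ E | ends i = s(x, y)}
  set Q := {i ∈ E | ends i ≠ s(x, y)}
  have hPQ : Disjoint P Q := disjoint_filter_filter_not E E _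
  have hE : E = P ∪ Q := (filter_union_filter_not_eq _ E).symm
  have hW : ∑ S ∈ P.powerset.erase ∅, ∏ i ∈ S, v i = (∏ i ∈ P, (1 + v i)) - 1 := by
    rw [prod_one_add, ← sum_erase_add _ _ (empty_mem_powerset P), prod_empty,
      add_sub_cancel_right]
  simp only [multiTutteCoeff, sum_filter]
  conv_lhs => rw [hE, sum_powerset_union hPQ, ← add_sum_erase _ _ (empty_mem_powerset P)]
  simp only [empty_union]
  rw [← hW, sum_mul]
  congr 1
  refine sum_congr rfl fun S hS => ?_
  obtain ⟨hS, hSP⟩ := mem_erase.1 hS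
  rw [mem_powerset] at hSP
  rw [mul_sum]
  refine sum_congr rfl fun T hT => ?_
  rw [prod_union (hPQ.mono hSP (mem_powerset.1 hT)), mul_ite, mul_zero, ← image_image,
    numCompOfEdges_image_map_mergeVertex, ← image_union_of_forall_eq (nonempty_iff_ne_empty.2 hS)
      fun i hi => (mem_filter.1 (hSP hi)).2]

theorem neg_one_pow_mul_multiTutteCoeff_eq_delete_add_contract [CommRing R] (ends : ι → Sym2 V)
    (E : Finset ι) (hxy : x ≠ y) (v : ι → R) {k : ℕ} (hk : k < Fintype.card V) :
    (-1) ^ (Fintype.card V - k) * multiTutteCoeff ends E k v =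
      (-1) ^ (Fintype.card V - k) * multiTutteCoeff ends {i ∈ E | ends i ≠ s(x, y)} k v +
        (1 - ∏ i ∈ E with ends i = s(x, y), (1 + v i)) *
          ((-1) ^ (Fintype.card {z // z ≠ y} - k) *
            multiTutteCoeff (Sym2.map (mergeVertex hxy) ∘ ends)
              {i ∈ E | ends i ≠ s(x, y)} k v) := by
  rw [multiTutteCoeff_eq_delete_add_contract _ _ hxy, Fintype.card_subtype_ne,
    show Fintype.card V - k = Fintype.card V - 1 - k + 1 by omega, pow_succ]
  ring

section Sign

variable [CommRing R] [LinearOrder R] [IsStrictOrderedRing R]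

theorem zero_le_neg_one_pow_mul_multiTutteCoeff (ends : ι → Sym2 V) (E : Finset ι)
    (hE : ∀ i ∈ E, ¬(ends i).IsDiag) (v : ι → R) (hv : ∀ i ∈ E, v i ∈ Set.Icc (-2) 0)
    {k : ℕ} (hk : k ≤ Fintype.card V) :
    0 ≤ (-1) ^ (Fintype.card V - k) * multiTutteCoeff ends E k v := by
  induction E using Finset.strongInduction generalizing V with | H E ih
  obtain hk | rfl := hk.lt_or_eq
  swap
  · simp [multiTutteCoeff_card ends E v hE]
  obtain rfl | ⟨e, he⟩ := E.eq_empty_or_nonempty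
  · rw [multiTutteCoeff_eq_zero_of_lt _ _ _ (by simpa [numCompOfEdges_empty]), mul_zero]
  rcases hexy : ends e with ⟨x, y⟩
  have hxy : x ≠ y := by simpa [hexy] using hE e he
  have hQ : {i ∈ E | ends i ≠ s(x, y)} ⊂ E :=
    filter_ssubset.2 ⟨e, he, by simpa using hexy⟩
  rw [neg_one_pow_mul_multiTutteCoeff_eq_delete_add_contract ends E hxy v hk]
  refine add_nonneg (ih _ hQ ends (fun i hi => hE i (mem_filter.1 hi).1)
      (fun i hi => hv i (mem_filter.1 hi).1) hk.le) (mul_nonneg ?_ (ih _ hQ _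
      (fun i hi => not_isDiag_map_mergeVertex hxy (hE i (mem_filter.1 hi).1) (mem_filter.1 hi).2)
      (fun i hi => hv i (mem_filter.1 hi).1) (by rw [Fintype.card_subtype_ne]; omega)))
  exact sub_nonneg.2 (prod_one_add_le_one fun i hi => hv i (mem_filter.1 hi).1)

theorem zero_lt_neg_one_pow_mul_multiTutteCoeff (ends : ι → Sym2 V) (E : Finset ι)
    (hE : ∀ i ∈ E, ¬(ends i).IsDiag) (v : ι → R) (hv : ∀ i ∈ E, v i ∈ Set.Ioo (-2) 0)
    {k : ℕ} (hck : numCompOfEdges (E.image ends) ≤ k) (hk : k ≤ Fintype.card V) :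
    0 < (-1) ^ (Fintype.card V - k) * multiTutteCoeff ends E k v := by
  induction E using Finset.strongInduction generalizing V with | H E ih
  obtain hk | rfl := hk.lt_or_eq
  swap
  · simp [multiTutteCoeff_card ends E v hE]
  obtain rfl | ⟨e, he⟩ := E.eq_empty_or_nonempty
  · simp [numCompOfEdges_empty] at hck
    omega
  rcases hexy : ends e with ⟨x, y⟩
  have hxy : x ≠ y := by simpa [hexy] using hE e he
  have hQ : {i ∈ E | ends i ≠ s(x, y)} ⊂ E :=
    filter_ssubset.2 ⟨e, he, by simpa using hexy⟩
  have hP : e ∈ {i ∈ E | ends i = s(x, y)} := mem_filter.2 ⟨he, hexy⟩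
  have hcomp : numCompOfEdges
      ({i ∈ E | ends i ≠ s(x, y)}.image (Sym2.map (mergeVertex hxy) ∘ ends)) =
        numCompOfEdges (E.image ends) := by
    rw [← image_image, numCompOfEdges_image_map_mergeVertex,
      ← image_union_of_forall_eq ⟨e, hP⟩ fun i hi => (mem_filter.1 hi).2,
      filter_union_filter_not_eq]
  rw [neg_one_pow_mul_multiTutteCoeff_eq_delete_add_contract ends E hxy v hk]
  refine add_pos_of_nonneg_of_pos (zero_le_neg_one_pow_mul_multiTutteCoeff ends _
      (fun i hi => hE i (mem_filter.1 hi).1) v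
      (fun i hi => Set.Ioo_subset_Icc_self (hv i (mem_filter.1 hi).1)) hk.le)
    (mul_pos (sub_pos.2 (prod_one_add_lt_one hP fun i hi => hv i (mem_filter.1 hi).1))
      (ih _ hQ _
        (fun i hi => not_isDiag_map_mergeVertex hxy (hE i (mem_filter.1 hi).1) (mem_filter.1 hi).2)
        (fun i hi => hv i (mem_filter.1 hi).1) (hcomp.le.trans hck)
        (by rw [Fintype.card_subtype_ne]; omega)))

end Sign

end MultiTutteCoeff

/-- For a finite simple graph `G` with `n` vertices and `c` components and edge weights
`-2 ≤ v_e ≤ 0`:  `C_G^{[k]}(v) = 0` for `1 ≤ k < c`, `(-1)^{n-k} C_G^{[k]}(v) ≥ 0` for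
`c ≤ k ≤ n`, and `C_G^{[n]}(v) = 1`.  Moreover the inequalities are strict when
`-2 < v_e < 0` for every edge. -/
theorem tutteCoeff_alternating_signs {V : Type*} [Fintype V] [DecidableEq V]
    (G : SimpleGraph V) [DecidableRel G.Adj] (v : Sym2 V → ℝ)
    (n c : ℕ) (hn : n = Fintype.card V) (hc : c = Nat.card G.ConnectedComponent)
    (hv : ∀ e ∈ G.edgeFinset, -2 ≤ v e ∧ v e ≤ 0) :
    (∀ k, 1 ≤ k → k < c → tutteCoeff G k v = 0) ∧
    (∀ k, c ≤ k → k ≤ n → 0 ≤ (-1 : ℝ) ^ ((n : ℤ) - k) * tutteCoeff G k v) ∧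
    tutteCoeff G n v = 1 ∧
    ((∀ e ∈ G.edgeFinset, -2 < v e ∧ v e < 0) →
      ∀ k, c ≤ k → k ≤ n → 0 < (-1 : ℝ) ^ ((n : ℤ) - k) * tutteCoeff G k v) := by
  subst hn hc
  have hE (e) (he : e ∈ G.edgeFinset) : ¬(id e).IsDiag :=
    G.not_isDiag_of_mem_edgeSet (mem_edgeFinset.1 he)
  have hcomp : numCompOfEdges (G.edgeFinset.image id) = Nat.card G.ConnectedComponent := by
    simp [numCompOfEdges]
  have hsign {k : ℕ} (hk : k ≤ Fintype.card V) :
      (-1 : ℝ) ^ ((Fintype.card V : ℤ) - k) = (-1) ^ (Fintype.card V - k) := by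
    rw [← Nat.cast_sub hk, zpow_natCast]
  simp only [tutteCoeff_eq_multiTutteCoeff]
  refine ⟨fun k _ hk => multiTutteCoeff_eq_zero_of_lt _ _ _ (hcomp ▸ hk),
    fun k _ hk => hsign hk ▸ zero_le_neg_one_pow_mul_multiTutteCoeff _ _ hE v hv hk,
    multiTutteCoeff_card _ _ v hE,
    fun hv' k hck hk =>
      hsign hk ▸ zero_lt_neg_one_pow_mul_multiTutteCoeff _ _ hE v hv' (hcomp ▸ hck) hk⟩
end

section
/- Let M be a matroid with finite ground set E, rank function r, and rank r(M) = r(E), and let v : E → ℝ satisfy v_e ≥ −1 for every loop e of M and −2 ≤ v_e ≤ 0 for every non-loop element e. Then: (a) (−1)^s C̃_M^{[s]}(v) ≥ 0 for all 0 ≤ s ≤ r(M), and C̃_M^{[0]}(v) = ∏_{loops e of M} (1 + v_e); (b) Z̃_M(q,v) ≥ 0 for all real q < 0, with strict inequality if and only if every loop e has v_e > −1. Moreover, if v_e > −1 for every loop e and −2 < v_e < 0 for every non-loop element e, then (−1)^s C̃_M^{[s]}(v) > 0 for all 0 ≤ s ≤ r(M). -/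
open Finset

/-- A matroid with ground set the finite type `α`, presented by its rank function
(normalized, monotone, submodular). -/
structure RankMatroid (α : Type*) [DecidableEq α] where
  r : Finset α → ℕ
  r_le_card : ∀ A : Finset α, r A ≤ A.card
  mono : ∀ ⦃A B : Finset α⦄, A ⊆ B → r A ≤ r B
  submodular : ∀ A B : Finset α, r (A ∪ B) + r (A ∩ B) ≤ r A + r B

/-- The multivariate Tutte polynomial of a matroid:
`Z̃_M(q,v) = ∑_{A ⊆ E} q^{-r(A)} ∏_{e ∈ A} v_e`. -/
noncomputable def matZ {α : Type*} [DecidableEq α] [Fintype α] (M : RankMatroid α)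
    (q : ℝ) (v : α → ℝ) : ℝ :=
  ∑ A ∈ (Finset.univ : Finset α).powerset, q ^ (-(M.r A : ℤ)) * ∏ e ∈ A, v e

/-- The coefficient `C̃_M^{[s]}(v) = ∑_{A ⊆ E, r(A) = s} ∏_{e ∈ A} v_e` of `q^{-s}` in
`Z̃_M(q,v)`. -/
noncomputable def matCoeff {α : Type*} [DecidableEq α] [Fintype α] (M : RankMatroid α)
    (s : ℕ) (v : α → ℝ) : ℝ :=
  ∑ A ∈ (Finset.univ : Finset α).powerset.filter (fun A => M.r A = s), ∏ e ∈ A, v e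

/-! Fix `s` and look at the sign of `C̃^{[s]}`. A loop `e` splits off the factor `1 + v_e ≥ 0`.
Two parallel elements `e, f` can be merged into a single element of weight `w` with
`1 + w = (1 + v_e)(1 + v_f)`, which again lies in `[-2, 0]`. In a simple matroid, deletion and
contraction of any `e` give `C̃_M^{[s+1]} = C̃_{M∖e}^{[s+1]} + v_e C̃_{M/e}^{[s]}` with `M/e`
loopless, so both terms have sign `(-1)^{s+1}`. Run with strict bounds, this induction on the
ground set makes `(-1)^s C̃^{[s]}` positive up to the rank; the closed bounds follow by
continuity, and for `q < 0` every term of `Z̃ = ∑ₛ |q|^{-s} (-1)^s C̃^{[s]}` is nonnegative. -/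

namespace RankMatroid

variable {α : Type*} [DecidableEq α] (M : RankMatroid α)

theorem r_empty : M.r ∅ = 0 :=
  Nat.le_zero.mp (by simpa using M.r_le_card ∅)

theorem r_singleton_le_one (e : α) : M.r {e} ≤ 1 := by
  simpa using M.r_le_card {e}

theorem r_union_eq_of_le_r_inter {X Y : Finset α} (h : M.r Y ≤ M.r (X ∩ Y)) :
    M.r (X ∪ Y) = M.r X :=
  le_antisymm (by have := M.submodular X Y; omega) (M.mono subset_union_left)

theorem r_insert_of_loop {e : α} (he : M.r {e} = 0) (A : Finset α) :
    M.r (insert e A) = M.r A := by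
  rw [insert_eq, union_comm]
  exact M.r_union_eq_of_le_r_inter (by omega)

theorem r_insert_of_r_pair_le {e f : α} (hef : M.r {e, f} ≤ M.r {e}) {X : Finset α}
    (heX : e ∈ X) : M.r (insert f X) = M.r X := by
  have hinter : M.r {e} ≤ M.r (X ∩ {e, f}) := M.mono (by simp [heX])
  have hunion : insert f X = X ∪ {e, f} := by
    ext x; simp only [mem_insert, mem_union, mem_singleton]; grind
  rw [hunion]
  exact M.r_union_eq_of_le_r_inter (by omega)

theorem r_insert_eq_of_parallel {e f : α} (hef : M.r {e, f} ≤ M.r {e})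
    (hfe : M.r {e, f} ≤ M.r {f}) (A : Finset α) : M.r (insert f A) = M.r (insert e A) :=
  calc M.r (insert f A)
      = M.r (insert e (insert f A)) :=
        (M.r_insert_of_r_pair_le (pair_comm e f ▸ hfe) (mem_insert_self f A)).symm
    _ = M.r (insert f (insert e A)) := by rw [insert_comm]
    _ = M.r (insert e A) := M.r_insert_of_r_pair_le hef (mem_insert_self e A)

theorem r_erase_of_loop {e : α} {S : Finset α} (he : e ∈ S) (h0 : M.r {e} = 0) :
    M.r (S.erase e) = M.r S := by
  rw [← M.r_insert_of_loop h0, insert_erase he]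

theorem r_erase_of_r_pair_le {e f : α} {S : Finset α} (he : e ∈ S) (hf : f ∈ S)
    (hne : e ≠ f) (hef : M.r {e, f} ≤ M.r {e}) : M.r (S.erase f) = M.r S := by
  rw [← M.r_insert_of_r_pair_le hef (mem_erase.mpr ⟨hne, he⟩), insert_erase hf]

def contract (e : α) : RankMatroid α where
  r A := M.r (insert e A) - M.r {e}
  r_le_card A := by
    have := M.submodular {e} A
    have := M.r_le_card A
    rw [← insert_eq] at *
    omega
  mono A B hAB := Nat.sub_le_sub_right (M.mono (insert_subset_insert e hAB)) _
  submodular A B := by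
    have h := M.submodular (insert e A) (insert e B)
    rw [← insert_union_distrib, ← insert_inter_distrib] at h
    have := M.mono (singleton_subset_iff.mpr (mem_insert_self e (A ∪ B)))
    have := M.mono (singleton_subset_iff.mpr (mem_insert_self e (A ∩ B)))
    have := M.mono (singleton_subset_iff.mpr (mem_insert_self e A))
    have := M.mono (singleton_subset_iff.mpr (mem_insert_self e B))
    omega

theorem contract_r (e : α) (A : Finset α) :
    (M.contract e).r A = M.r (insert e A) - M.r {e} := rfl

end RankMatroid

section RankCoeff

variable {α : Type*}

/-- `matCoeff` restricted to subsets of `S`, for an arbitrary rank-like `ρ`: contracting `e`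
amounts to passing to `fun A => ρ (insert e A)`. -/
noncomputable def rankCoeff (ρ : Finset α → ℕ) (S : Finset α) (s : ℕ) (v : α → ℝ) : ℝ :=
  ∑ A ∈ S.powerset.filter (fun A => ρ A = s), ∏ e ∈ A, v e

theorem rankCoeff_congr {ρ ρ' : Finset α → ℕ} {S : Finset α} {v v' : α → ℝ}
    (hρ : ∀ A ⊆ S, ρ A = ρ' A) (hv : ∀ x ∈ S, v x = v' x) (s : ℕ) :
    rankCoeff ρ S s v = rankCoeff ρ' S s v' := by
  unfold rankCoeff
  rw [filter_congr fun A hA => by rw [hρ A (mem_powerset.mp hA)]]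
  exact sum_congr rfl fun A hA =>
    prod_congr rfl fun x hx => hv x (mem_powerset.mp (mem_filter.mp hA).1 hx)

theorem rankCoeff_update_of_notMem [DecidableEq α] (ρ : Finset α → ℕ) {S : Finset α} {e : α}
    (he : e ∉ S) (s : ℕ) (v : α → ℝ) (a : ℝ) :
    rankCoeff ρ S s (Function.update v e a) = rankCoeff ρ S s v :=
  rankCoeff_congr (fun _ _ => rfl)
    (fun _ hx => Function.update_of_ne (ne_of_mem_of_not_mem hx he) a v) s

theorem rankCoeff_eq_zero {ρ : Finset α → ℕ} {S : Finset α} {s : ℕ} (h : ∀ A ⊆ S, ρ A ≠ s)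
    (v : α → ℝ) : rankCoeff ρ S s v = 0 :=
  sum_eq_zero fun A hA =>
    absurd (mem_filter.mp hA).2 (h A (mem_powerset.mp (mem_filter.mp hA).1))

theorem rankCoeff_add_one (ρ : Finset α → ℕ) (S : Finset α) (s : ℕ) (v : α → ℝ) :
    rankCoeff (fun A => ρ A + 1) S (s + 1) v = rankCoeff ρ S s v := by
  simp only [rankCoeff, Nat.add_right_cancel_iff]

theorem rankCoeff_insert [DecidableEq α] (ρ : Finset α → ℕ) {e : α} {T : Finset α}
    (he : e ∉ T) (s : ℕ) (v : α → ℝ) :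
    rankCoeff ρ (insert e T) s v =
      rankCoeff ρ T s v + v e * rankCoeff (fun A => ρ (insert e A)) T s v := by
  simp only [rankCoeff, sum_filter, sum_powerset_insert he, mul_sum]
  congr 1
  refine sum_congr rfl fun A hA => ?_
  rw [prod_insert fun heA => he (mem_powerset.mp hA heA)]
  split_ifs <;> simp

end RankCoeff

namespace RankMatroid

variable {α : Type*} [DecidableEq α] (M : RankMatroid α)

theorem rankCoeff_insert_of_loop {e : α} {T : Finset α} (he : e ∉ T) (h0 : M.r {e} = 0)
    (s : ℕ) (v : α → ℝ) :
    rankCoeff M.r (insert e T) s v = (1 + v e) * rankCoeff M.r T s v := by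
  rw [rankCoeff_insert M.r he, funext (M.r_insert_of_loop h0)]
  ring

theorem rankCoeff_eq_mul_erase_of_loop {e : α} {S : Finset α} (he : e ∈ S)
    (h0 : M.r {e} = 0) (s : ℕ) (v : α → ℝ) :
    rankCoeff M.r S s v = (1 + v e) * rankCoeff M.r (S.erase e) s v := by
  conv_lhs => rw [← insert_erase he]
  exact M.rankCoeff_insert_of_loop (notMem_erase e S) h0 s v

theorem rankCoeff_succ_of_nonloop {e : α} {S : Finset α} (he : e ∈ S) (h1 : M.r {e} = 1)
    (s : ℕ) (v : α → ℝ) :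
    rankCoeff M.r S (s + 1) v =
      rankCoeff M.r (S.erase e) (s + 1) v +
        v e * rankCoeff (M.contract e).r (S.erase e) s v := by
  have hshift : (fun A => M.r (insert e A)) = fun A => (M.contract e).r A + 1 := by
    funext A
    have := M.mono (singleton_subset_iff.mpr (mem_insert_self e A))
    rw [contract_r]
    omega
  conv_lhs => rw [← insert_erase he]
  rw [rankCoeff_insert M.r (notMem_erase e S), hshift, rankCoeff_add_one]

theorem rankCoeff_zero (S : Finset α) (v : α → ℝ) :
    rankCoeff M.r S 0 v = ∏ e ∈ S.filter (fun e => M.r {e} = 0), (1 + v e) := by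
  induction S using Finset.induction_on with
  | empty => simp [rankCoeff, filter_singleton, M.r_empty]
  | insert e T he ih =>
    rw [filter_insert]
    by_cases h0 : M.r {e} = 0
    · rw [M.rankCoeff_insert_of_loop he h0, if_pos h0, prod_insert (by simp [he]), ih]
    · have hpos (A : Finset α) : M.r (insert e A) ≠ 0 := by
        have := M.mono (singleton_subset_iff.mpr (mem_insert_self e A))
        omega
      rw [rankCoeff_insert M.r he, rankCoeff_eq_zero (fun A _ => hpos A), if_neg h0, ih]
      ring

theorem rankCoeff_merge_parallel {e f : α} {S : Finset α} (he : e ∈ S) (hf : f ∈ S)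
    (hne : e ≠ f) (hef : M.r {e, f} ≤ M.r {e}) (hfe : M.r {e, f} ≤ M.r {f}) (s : ℕ)
    (v : α → ℝ) :
    rankCoeff M.r S s v =
      rankCoeff M.r (S.erase f) s (Function.update v e (v e + v f + v e * v f)) := by
  set T := (S.erase f).erase e
  have heT : e ∉ T := notMem_erase e _
  have hfT : f ∉ insert e T := by simp [T, hne.symm]
  have hSf : S.erase f = insert e T := (insert_erase (mem_erase.mpr ⟨hne, he⟩)).symm
  calc rankCoeff M.r S s v = rankCoeff M.r (insert f (insert e T)) s v := by
        rw [← hSf, insert_erase hf]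
    _ = rankCoeff M.r (insert e T) s (Function.update v e (v e + v f + v e * v f)) := by
        rw [rankCoeff_insert M.r hfT, rankCoeff_insert M.r heT, rankCoeff_insert _ heT,
          rankCoeff_insert M.r heT]
        simp only [M.r_insert_of_r_pair_le hef (mem_insert_self e _),
          M.r_insert_eq_of_parallel hef hfe, rankCoeff_update_of_notMem _ heT,
          Function.update_self]
        ring
    _ = _ := by rw [hSf]

end RankMatroid

section Sign

variable {α : Type*} [DecidableEq α]

structure IsStrictWeight (M : RankMatroid α) (S : Finset α) (v : α → ℝ) : Prop where
  loop : ∀ e ∈ S, M.r {e} = 0 → -1 < v e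
  nonloop : ∀ e ∈ S, M.r {e} ≠ 0 → -2 < v e ∧ v e < 0

namespace IsStrictWeight

variable {M : RankMatroid α} {S : Finset α} {v : α → ℝ}

theorem erase (h : IsStrictWeight M S v) (e : α) : IsStrictWeight M (S.erase e) v :=
  ⟨fun x hx => h.loop x (mem_of_mem_erase hx), fun x hx => h.nonloop x (mem_of_mem_erase hx)⟩

theorem merge (h : IsStrictWeight M S v) {e f : α} (he : e ∈ S) (hf : f ∈ S)
    (he0 : M.r {e} ≠ 0) (hf0 : M.r {f} ≠ 0) :
    IsStrictWeight M (S.erase f) (Function.update v e (v e + v f + v e * v f)) := by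
  refine ⟨fun x hx hx0 => ?_, fun x hx hx0 => ?_⟩ <;> rcases eq_or_ne x e with rfl | hxe
  · exact absurd hx0 he0
  · rw [Function.update_of_ne hxe]
    exact h.loop x (mem_of_mem_erase hx) hx0
  · obtain ⟨hve, hve'⟩ := h.nonloop x he he0
    obtain ⟨hvf, hvf'⟩ := h.nonloop f hf hf0
    rw [Function.update_self]
    constructor <;> nlinarith
  · rw [Function.update_of_ne hxe]
    exact h.nonloop x (mem_of_mem_erase hx) hx0

theorem contract (h : IsStrictWeight M S v) {e : α} (h1 : M.r {e} = 1)
    (hnonloop : ∀ x ∈ S, M.r {x} ≠ 0) (hsimple : ∀ x ∈ S, x ≠ e → M.r {e, x} ≠ 1) :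
    IsStrictWeight (M.contract e) (S.erase e) v := by
  refine ⟨fun x hx hx0 => ?_, fun x hx _ =>
    h.nonloop x (mem_of_mem_erase hx) (hnonloop x (mem_of_mem_erase hx))⟩
  have := M.mono (show ({e} : Finset α) ⊆ {e, x} by simp)
  rw [RankMatroid.contract_r, h1] at hx0
  exact absurd (by omega) (hsimple x (mem_of_mem_erase hx) (ne_of_mem_erase hx))

end IsStrictWeight

theorem neg_one_pow_mul_rankCoeff_nonneg_of_pos {M : RankMatroid α} {S : Finset α}
    {v : α → ℝ} (h : ∀ s ≤ M.r S, 0 < (-1 : ℝ) ^ s * rankCoeff M.r S s v) (s : ℕ) :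
    0 ≤ (-1 : ℝ) ^ s * rankCoeff M.r S s v := by
  by_cases hs : s ≤ M.r S
  · exact (h s hs).le
  · have hA (A : Finset α) (hA : A ⊆ S) : M.r A ≠ s := by
      have := M.mono hA
      omega
    rw [rankCoeff_eq_zero hA, mul_zero]

theorem neg_one_pow_mul_rankCoeff_pos_of_nonloop {M : RankMatroid α} {e : α}
    {S : Finset α} (he : e ∈ S) (h1 : M.r {e} = 1) {v : α → ℝ} (hve : v e < 0) {s : ℕ}
    (hdel : 0 ≤ (-1 : ℝ) ^ (s + 1) * rankCoeff M.r (S.erase e) (s + 1) v)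
    (hcon : 0 < (-1 : ℝ) ^ s * rankCoeff (M.contract e).r (S.erase e) s v) :
    0 < (-1 : ℝ) ^ (s + 1) * rankCoeff M.r S (s + 1) v := by
  have hcon' := mul_pos (neg_pos.mpr hve) hcon
  calc 0 < (-1 : ℝ) ^ (s + 1) * rankCoeff M.r (S.erase e) (s + 1) v +
        -v e * ((-1 : ℝ) ^ s * rankCoeff (M.contract e).r (S.erase e) s v) :=
        add_pos_of_nonneg_of_pos hdel hcon'
    _ = _ := by rw [M.rankCoeff_succ_of_nonloop he h1]; ring

theorem neg_one_pow_mul_rankCoeff_pos {M : RankMatroid α} {S : Finset α} {v : α → ℝ}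
    (hv : IsStrictWeight M S v) {s : ℕ} (hs : s ≤ M.r S) :
    0 < (-1 : ℝ) ^ s * rankCoeff M.r S s v := by
  induction S using Finset.strongInduction generalizing M v s with
  | _ S ih =>
  rcases s with _ | s
  · rw [pow_zero, one_mul, M.rankCoeff_zero]
    exact prod_pos fun e he => by linarith [hv.loop e (mem_filter.mp he).1 (mem_filter.mp he).2]
  by_cases hasLoop : ∃ e ∈ S, M.r {e} = 0
  · obtain ⟨e, heS, h0⟩ := hasLoop
    rw [M.rankCoeff_eq_mul_erase_of_loop heS h0, mul_left_comm]
    refine mul_pos (by linarith [hv.loop e heS h0]) (ih _ (erase_ssubset heS) (hv.erase e) ?_)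
    rwa [M.r_erase_of_loop heS h0]
  push Not at hasLoop
  have hr1 (e : α) (he : e ∈ S) : M.r {e} = 1 := by
    have := M.r_singleton_le_one e
    have := hasLoop e he
    omega
  by_cases hasParallel : ∃ e ∈ S, ∃ f ∈ S, e ≠ f ∧ M.r {e, f} = 1
  · obtain ⟨e, heS, f, hfS, hne, hp⟩ := hasParallel
    have hef : M.r {e, f} ≤ M.r {e} := (hp.trans (hr1 e heS).symm).le
    rw [M.rankCoeff_merge_parallel heS hfS hne hef (hp.trans (hr1 f hfS).symm).le]
    refine ih _ (erase_ssubset hfS) (hv.merge heS hfS (hasLoop e heS) (hasLoop f hfS)) ?_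
    rwa [M.r_erase_of_r_pair_le heS hfS hne hef]
  push Not at hasParallel
  obtain ⟨e, heS⟩ : S.Nonempty :=
    nonempty_iff_ne_empty.mpr fun h => by simp [h, M.r_empty] at hs
  have hsub : S.erase e ⊂ S := erase_ssubset heS
  refine neg_one_pow_mul_rankCoeff_pos_of_nonloop heS (hr1 e heS)
    (hv.nonloop e heS (hasLoop e heS)).2
    (neg_one_pow_mul_rankCoeff_nonneg_of_pos (fun s hs => ih _ hsub (hv.erase e) hs) _)
    (ih _ hsub (hv.contract (hr1 e heS) hasLoop fun x hx hxe =>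
      hasParallel e heS x hx hxe.symm) ?_)
  rw [RankMatroid.contract_r, hr1 e heS, insert_erase heS]
  omega

open Filter Topology in
theorem neg_one_pow_mul_rankCoeff_nonneg (M : RankMatroid α) (S : Finset α) (v : α → ℝ)
    (hloop : ∀ e ∈ S, M.r {e} = 0 → -1 ≤ v e)
    (hnonloop : ∀ e ∈ S, M.r {e} ≠ 0 → -2 ≤ v e ∧ v e ≤ 0) (s : ℕ) :
    0 ≤ (-1 : ℝ) ^ s * rankCoeff M.r S s v := by
  -- `w 0 = v`, and `w t` is a strict weight for `0 < t < 1`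
  let c : α → ℝ := fun e => if M.r {e} = 0 then 0 else -1
  let w : ℝ → α → ℝ := fun t e => v e + t * (c e - v e)
  have hcont : Continuous fun t => (-1 : ℝ) ^ s * rankCoeff M.r S s (w t) := by
    unfold rankCoeff; fun_prop
  have hlim : Tendsto (fun t => (-1 : ℝ) ^ s * rankCoeff M.r S s (w t)) (𝓝[>] 0)
      (𝓝 ((-1 : ℝ) ^ s * rankCoeff M.r S s v)) := by
    simpa [w] using (hcont.tendsto 0).mono_left nhdsWithin_le_nhds
  refine ge_of_tendsto hlim ?_
  filter_upwards [Ioo_mem_nhdsGT zero_lt_one] with t ⟨ht0, ht1⟩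
  have hw : IsStrictWeight M S (w t) := by
    refine ⟨fun e he he0 => ?_, fun e he he0 => ?_⟩
    · have := hloop e he he0
      simp only [w, c, if_pos he0]
      nlinarith
    · obtain ⟨hlo, hhi⟩ := hnonloop e he he0
      simp only [w, c, if_neg he0]
      constructor <;> nlinarith
  exact neg_one_pow_mul_rankCoeff_nonneg_of_pos (fun _ hs => neg_one_pow_mul_rankCoeff_pos hw hs) s

end Sign

theorem matCoeff_eq_rankCoeff {α : Type*} [DecidableEq α] [Fintype α] (M : RankMatroid α)
    (s : ℕ) (v : α → ℝ) : matCoeff M s v = rankCoeff M.r univ s v := rfl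

theorem matZ_eq_sum_matCoeff {α : Type*} [DecidableEq α] [Fintype α] (M : RankMatroid α)
    (q : ℝ) (v : α → ℝ) :
    matZ M q v = ∑ s ∈ range (M.r univ + 1), (-q)⁻¹ ^ s * ((-1) ^ s * matCoeff M s v) := by
  rw [matZ, ← sum_fiberwise_of_maps_to (g := M.r) (t := range (M.r univ + 1))
    fun A _ => mem_range.mpr (Nat.lt_succ_of_le (M.mono (subset_univ A)))]
  refine sum_congr rfl fun s _ => ?_
  rw [matCoeff, mul_sum, mul_sum]
  refine sum_congr rfl fun A hA => ?_
  rw [(mem_filter.mp hA).2, zpow_neg, zpow_natCast, ← mul_assoc, ← mul_pow, inv_neg,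
    neg_mul_neg, mul_one, inv_pow]

/-- For a matroid `M` with `v_e ≥ -1` on loops and `-2 ≤ v_e ≤ 0` on non-loops:
(a) `(-1)^s C̃_M^{[s]}(v) ≥ 0` for `0 ≤ s ≤ r(M)`, with
`C̃_M^{[0]}(v) = ∏_{loops e} (1 + v_e)`;
(b) `Z̃_M(q,v) ≥ 0` for all `q < 0`, strictly iff every loop has `v_e > -1`.
Moreover under strict hypotheses all the coefficient inequalities are strict. -/
theorem matCoeff_alternating_and_matZ_nonneg {α : Type*} [DecidableEq α] [Fintype α]
    (M : RankMatroid α) (v : α → ℝ)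
    (hloop : ∀ e : α, M.r {e} = 0 → -1 ≤ v e)
    (hnonloop : ∀ e : α, M.r {e} ≠ 0 → -2 ≤ v e ∧ v e ≤ 0) :
    (∀ s : ℕ, s ≤ M.r Finset.univ → 0 ≤ (-1 : ℝ) ^ s * matCoeff M s v) ∧
    matCoeff M 0 v = ∏ e ∈ Finset.univ.filter (fun e : α => M.r {e} = 0), (1 + v e) ∧
    (∀ q : ℝ, q < 0 → 0 ≤ matZ M q v) ∧
    (∀ q : ℝ, q < 0 → (0 < matZ M q v ↔ ∀ e : α, M.r {e} = 0 → -1 < v e)) ∧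
    ((∀ e : α, M.r {e} = 0 → -1 < v e) → (∀ e : α, M.r {e} ≠ 0 → -2 < v e ∧ v e < 0) →
      ∀ s : ℕ, s ≤ M.r Finset.univ → 0 < (-1 : ℝ) ^ s * matCoeff M s v) := by
  have hcoeff (s : ℕ) : 0 ≤ (-1 : ℝ) ^ s * matCoeff M s v :=
    neg_one_pow_mul_rankCoeff_nonneg M univ v (fun e _ => hloop e) (fun e _ => hnonloop e) s
  have hC0 : matCoeff M 0 v = _ := M.rankCoeff_zero univ v
  have hterm {q : ℝ} (hq : q < 0) (s : ℕ) : 0 ≤ (-q)⁻¹ ^ s * ((-1) ^ s * matCoeff M s v) :=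
    mul_nonneg (pow_nonneg (inv_nonneg.mpr (by linarith)) s) (hcoeff s)
  refine ⟨fun s _ => hcoeff s, hC0, fun q hq => ?_, fun q hq => ⟨fun hpos e he0 => ?_,
    fun hstrict => ?_⟩, fun hl hnl s hs => neg_one_pow_mul_rankCoeff_pos ⟨fun e _ => hl e,
    fun e _ => hnl e⟩ hs⟩
  · rw [matZ_eq_sum_matCoeff]
    exact sum_nonneg fun s _ => hterm hq s
  · by_contra! hle
    have hzero (s : ℕ) : matCoeff M s v = 0 := by
      rw [matCoeff_eq_rankCoeff, M.rankCoeff_eq_mul_erase_of_loop (mem_univ e) he0,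
        le_antisymm hle (hloop e he0)]
      ring
    simp [matZ_eq_sum_matCoeff, hzero] at hpos
  · rw [matZ_eq_sum_matCoeff]
    refine sum_pos' (fun s _ => hterm hq s) ⟨0, by simp, ?_⟩
    rw [pow_zero, pow_zero, one_mul, one_mul, hC0]
    exact prod_pos fun e he => by linarith [hstrict e (mem_filter.mp he).2]
end

section
/- Let G = (V,E) be a finite simple graph with c connected components, fix a real number q < 0, and let v : E → ℝ satisfy v_e ≥ −q for every bridge e of G and v_e ≥ −q/2 for every non-bridge edge e. Then (−1)^c Z_G(q,v) ≥ 0, with strict inequality if and only if every bridge e has v_e > −q. -/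
open Finset

/-- The multivariate Tutte polynomial `Z_G(q, v) = ∑_{A ⊆ E} q^{k(A)} ∏_{e ∈ A} v_e`. -/
noncomputable def tutteZ {V : Type*} [Fintype V] [DecidableEq V] (G : SimpleGraph V)
    [DecidableRel G.Adj] (q : ℝ) (v : Sym2 V → ℝ) : ℝ :=
  ∑ A ∈ G.edgeFinset.powerset, q ^ numCompOfEdges A * ∏ e ∈ A, v e

/-!
Let `Z(E, F) = ∑_{F ⊆ A ⊆ E} q^{k(A)} ∏_{A \ F} v` be the partition function of the edge set `E`
with the edges of `F` contracted; induct on `|E \ F|`, tracking the sign `(-1)^{k(E)}`.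
A free bridge `f` factors out: `Z(E, F) = (q + v f) Z(E, F ∪ {f})` with `q + v f ≥ 0`.
If no free edge is a bridge, pick a free edge `e` and let `B` be the free edges that become
bridges once `e` is deleted. The edges of `T = {e} ∪ B` are pairwise in series, and expanding
`Z` over the subsets of `T` gives
  `q Z(E, F) = q (∏_T v) Z(E, F ∪ T) + (∏_T (q + v) - ∏_T v) Z(E - e, F ∪ B)`.
Neither partition function on the right has a free bridge, and `k(E - e) = k(E)`, so both are
strictly of sign `(-1)^{k(E)}` by induction. As `v ≥ -q/2` means `|q + v| ≤ v`, the second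
coefficient is `≤ 0`, while `q ∏_T v < 0`; hence `(-1)^{k(E)} Z(E, F) > 0`.
-/

namespace SimpleGraph

variable {V : Type*} {G H : SimpleGraph V} {x y : V}

lemma Reachable.sup_edge_cases {u w : V} (h : (H ⊔ edge x y).Reachable u w) :
    H.Reachable u w ∨ (H.Reachable u x ∧ H.Reachable y w) ∨
      (H.Reachable u y ∧ H.Reachable x w) := by
  obtain ⟨p⟩ := h
  induction p with
  | nil => exact .inl .rfl
  | @cons a b c hab _ ih =>
    rcases (sup_adj ..).mp hab with hab | hab
    · rcases ih with h | ⟨h₁, h₂⟩ | ⟨h₁, h₂⟩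
      · exact .inl (hab.reachable.trans h)
      · exact .inr (.inl ⟨hab.reachable.trans h₁, h₂⟩)
      · exact .inr (.inr ⟨hab.reachable.trans h₁, h₂⟩)
    · rcases (edge_adj ..).mp hab with ⟨⟨rfl, rfl⟩ | ⟨rfl, rfl⟩, -⟩ <;> grind [Reachable.rfl]

lemma card_connectedComponent_eq_of_reachable (hHG : H ≤ G) (hGH : G ≤ H ⊔ edge x y)
    (h : H.Reachable x y) : Nat.card H.ConnectedComponent = Nat.card G.ConnectedComponent := by
  refine Nat.card_eq_of_bijective _ ⟨?_, ConnectedComponent.surjective_map_ofLE hHG⟩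
  intro c d
  induction c using ConnectedComponent.ind with | h u =>
  induction d using ConnectedComponent.ind with | h w =>
  simp only [ConnectedComponent.map_mk, Hom.coe_ofLE, id_eq, ConnectedComponent.eq]
  intro huw
  rcases (huw.mono hGH).sup_edge_cases with h' | ⟨h₁, h₂⟩ | ⟨h₁, h₂⟩
  · exact h'
  · exact h₁.trans (h.trans h₂)
  · exact h₁.trans (h.symm.trans h₂)

lemma card_connectedComponent_eq_add_one_of_not_reachable [Finite V] (hHG : H ≤ G)
    (hGH : G ≤ H ⊔ edge x y) (hxy : G.Adj x y) (h : ¬H.Reachable x y) :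
    Nat.card H.ConnectedComponent = Nat.card G.ConnectedComponent + 1 := by
  -- only the components of `x` and `y` merge, so dropping that of `y` leaves a bijection
  let φ : {c : H.ConnectedComponent // c ≠ H.connectedComponentMk y} → G.ConnectedComponent :=
    fun c => c.1.map (Hom.ofLE hHG)
  have hφ : Function.Bijective φ := by
    constructor
    · rintro ⟨c, hc⟩ ⟨d, hd⟩
      induction c using ConnectedComponent.ind with | h u =>
      induction d using ConnectedComponent.ind with | h w =>
      simp only [ne_eq, ConnectedComponent.eq] at hc hd
      simp only [φ, ConnectedComponent.map_mk, Hom.coe_ofLE, id_eq, ConnectedComponent.eq,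
        Subtype.mk.injEq]
      intro huw
      rcases (huw.mono hGH).sup_edge_cases with h' | ⟨_, h₂⟩ | ⟨h₁, _⟩
      · exact h'
      · exact absurd h₂.symm hd
      · exact absurd h₁ hc
    · intro c
      induction c using ConnectedComponent.ind with | h w =>
      by_cases hw : H.Reachable w y
      · refine ⟨⟨H.connectedComponentMk x, by simpa [ConnectedComponent.eq] using h⟩, ?_⟩
        simp only [φ, ConnectedComponent.map_mk, Hom.coe_ofLE, id_eq, ConnectedComponent.eq]
        exact hxy.reachable.trans (hw.mono hHG).symm
      · exact ⟨⟨H.connectedComponentMk w, by simpa [ConnectedComponent.eq] using hw⟩, rfl⟩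
  have := Fintype.ofFinite H.ConnectedComponent
  classical
  rw [← Nat.card_eq_of_bijective φ hφ, Nat.card_eq_fintype_card, Nat.card_eq_fintype_card,
    Fintype.card_subtype_compl, Fintype.card_subtype_eq]
  have : 0 < Fintype.card H.ConnectedComponent :=
    Fintype.card_pos_iff.mpr ⟨H.connectedComponentMk y⟩
  omega

lemma card_connectedComponent_deleteEdges_of_not_isBridge {e : Sym2 V} (h : ¬G.IsBridge e) :
    Nat.card (G.deleteEdges {e}).ConnectedComponent = Nat.card G.ConnectedComponent := by
  induction e with | h x y =>
  exact card_connectedComponent_eq_of_reachable (deleteEdges_le _) le_sdiff_sup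
    (not_not.mp (isBridge_iff.not.mp h))

lemma card_connectedComponent_deleteEdges_of_isBridge [Finite V] {e : Sym2 V}
    (he : e ∈ G.edgeSet) (h : G.IsBridge e) :
    Nat.card (G.deleteEdges {e}).ConnectedComponent = Nat.card G.ConnectedComponent + 1 := by
  induction e with | h x y =>
  exact card_connectedComponent_eq_add_one_of_not_reachable (deleteEdges_le _) le_sdiff_sup he
    (isBridge_iff.mp h)

lemma fromEdgeSet_erase [DecidableEq V] (E : Finset (Sym2 V)) (e : Sym2 V) :
    fromEdgeSet ↑(E.erase e) = (fromEdgeSet ↑E).deleteEdges {e} := by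
  rw [deleteEdges_fromEdgeSet, coe_erase]

end SimpleGraph

lemma Finset.prod_le_prod_of_abs_le {ι R : Type*} [CommRing R] [LinearOrder R]
    [IsStrictOrderedRing R] {s : Finset ι} {f g : ι → R} (h : ∀ i ∈ s, |f i| ≤ g i) :
    ∏ i ∈ s, f i ≤ ∏ i ∈ s, g i :=
  (le_abs_self _).trans ((abs_prod s f).trans_le (prod_le_prod (fun _ _ => abs_nonneg _) h))

section

open SimpleGraph

variable {V : Type*} [Fintype V] [DecidableEq V] {E F T : Finset (Sym2 V)} {e b b' : Sym2 V}
  {q : ℝ} {v : Sym2 V → ℝ}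

lemma numCompOfEdges_erase_of_isBridge (he : e ∈ E) (h : (fromEdgeSet ↑E).IsBridge e) :
    numCompOfEdges (E.erase e) = numCompOfEdges E + 1 := by
  have hdiag : ¬e.IsDiag := by
    induction e with | h x y =>
    rintro (rfl : x = y)
    exact (isBridge_iff.mp h) .rfl
  rw [numCompOfEdges, fromEdgeSet_erase]
  exact card_connectedComponent_deleteEdges_of_isBridge
    (by simpa [edgeSet_fromEdgeSet] using ⟨he, hdiag⟩) h

lemma numCompOfEdges_erase_of_not_isBridge (h : ¬(fromEdgeSet ↑E).IsBridge e) :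
    numCompOfEdges (E.erase e) = numCompOfEdges E := by
  rw [numCompOfEdges, fromEdgeSet_erase]
  exact card_connectedComponent_deleteEdges_of_not_isBridge h

lemma numCompOfEdges_le_erase (E : Finset (Sym2 V)) (e : Sym2 V) :
    numCompOfEdges E ≤ numCompOfEdges (E.erase e) :=
  ConnectedComponent.card_le_card_of_le (fromEdgeSet_mono (by simp))

lemma numCompOfEdges_erase_le (E : Finset (Sym2 V)) (e : Sym2 V) :
    numCompOfEdges (E.erase e) ≤ numCompOfEdges E + 1 := by
  by_cases he : e ∈ E
  · by_cases h : (fromEdgeSet ↑E).IsBridge e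
    · exact (numCompOfEdges_erase_of_isBridge he h).le
    · exact (numCompOfEdges_erase_of_not_isBridge h).le.trans (Nat.le_succ _)
  · rw [erase_eq_of_notMem he]
    exact Nat.le_succ _

lemma isBridge_erase_comm (hb : b ∈ E.erase e) (hnb : ¬(fromEdgeSet ↑E).IsBridge b)
    (h : (fromEdgeSet ↑(E.erase e)).IsBridge b) : (fromEdgeSet ↑(E.erase b)).IsBridge e := by
  -- otherwise `k(E - b - e) = k(E - b) = k(E)`, while `k(E - e - b) = k(E - e) + 1 > k(E)`
  by_contra hc
  have h₁ := numCompOfEdges_erase_of_not_isBridge hc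
  have h₂ := numCompOfEdges_erase_of_isBridge hb h
  rw [erase_right_comm, numCompOfEdges_erase_of_not_isBridge hnb] at h₁
  have := numCompOfEdges_le_erase E e
  omega

lemma isBridge_erase_of_isBridge_erase (hb : b ∈ E.erase e) (hb' : b' ∈ E.erase e)
    (hbb' : b ≠ b') (hnb : ¬(fromEdgeSet ↑E).IsBridge b) (h : (fromEdgeSet ↑(E.erase e)).IsBridge b)
    (h' : (fromEdgeSet ↑(E.erase e)).IsBridge b') : (fromEdgeSet ↑(E.erase b)).IsBridge b' := by
  -- otherwise `k(E - b - b') = k(E)`, while deleting `e` as well adds two components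
  by_contra hc
  have h₁ := numCompOfEdges_erase_of_not_isBridge hc
  rw [numCompOfEdges_erase_of_not_isBridge hnb] at h₁
  have h₂ := numCompOfEdges_erase_of_isBridge hb h
  have h₃ := numCompOfEdges_erase_of_isBridge (mem_erase.mpr ⟨hbb'.symm, hb'⟩)
    (h'.anti (fromEdgeSet_mono (by simp)))
  have := numCompOfEdges_le_erase E e
  have := numCompOfEdges_erase_le ((E.erase b).erase b') e
  rw [erase_right_comm (a := b'), erase_right_comm (a := b)] at this
  omega

def IsSeriesSet (E T : Finset (Sym2 V)) : Prop :=
  ∀ t ∈ T, ∀ t' ∈ T, t ≠ t' → (fromEdgeSet ↑(E.erase t)).IsBridge t'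

lemma isSeriesSet_insert {B : Finset (Sym2 V)} (hB : B ⊆ E.erase e)
    (hnB : ∀ b ∈ B, ¬(fromEdgeSet ↑E).IsBridge b)
    (hBbr : ∀ b ∈ B, (fromEdgeSet ↑(E.erase e)).IsBridge b) : IsSeriesSet E (insert e B) := by
  intro t ht t' ht' htt'
  rw [mem_insert] at ht ht'
  rcases ht with rfl | ht <;> rcases ht' with rfl | ht'
  · exact absurd rfl htt'
  · exact hBbr t' ht'
  · exact isBridge_erase_comm (hB ht) (hnB t ht) (hBbr t ht)
  · exact isBridge_erase_of_isBridge_erase (hB ht) (hB ht') htt' (hnB t ht) (hBbr t ht)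
      (hBbr t' ht')

/-- The partition function of the edge set `E` with the edges of `F` contracted. -/
noncomputable def contractZ (q : ℝ) (v : Sym2 V → ℝ) (E F : Finset (Sym2 V)) : ℝ :=
  ∑ B ∈ (E \ F).powerset, q ^ numCompOfEdges (F ∪ B) * ∏ e ∈ B, v e

lemma tutteZ_eq_contractZ (G : SimpleGraph V) [DecidableRel G.Adj] (q : ℝ) (v : Sym2 V → ℝ) :
    tutteZ G q v = contractZ q v G.edgeFinset ∅ := by
  simp [tutteZ, contractZ]

lemma contractZ_self (q : ℝ) (v : Sym2 V → ℝ) (E : Finset (Sym2 V)) :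
    contractZ q v E E = q ^ numCompOfEdges E := by
  simp [contractZ]

lemma contractZ_eq_erase_add (he : e ∈ E \ F) :
    contractZ q v E F = contractZ q v (E.erase e) F + v e * contractZ q v E (insert e F) := by
  have hsplit : E \ F = insert e (E \ insert e F) := by
    rw [sdiff_insert, insert_erase he]
  rw [contractZ, contractZ, contractZ, hsplit, sum_powerset_insert (by simp), erase_sdiff_comm,
    sdiff_insert, mul_sum]
  congr 1
  refine sum_congr rfl fun B hB => ?_
  have heB : e ∉ B := fun h => by simpa using mem_powerset.mp hB h
  rw [union_insert, ← insert_union, prod_insert heB]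
  ring

lemma contractZ_erase_of_isBridge (he : e ∈ E) (hF : F ⊆ E.erase e)
    (h : (fromEdgeSet ↑E).IsBridge e) :
    contractZ q v (E.erase e) F = q * contractZ q v E (insert e F) := by
  have heF : e ∉ F := fun h => by simpa using hF h
  rw [contractZ, contractZ, erase_sdiff_comm, sdiff_insert, mul_sum]
  refine sum_congr rfl fun B hB => ?_
  have hBE : B ⊆ E.erase e := (mem_powerset.mp hB).trans (erase_subset_erase _ sdiff_subset)
  have hk : numCompOfEdges (F ∪ B) = numCompOfEdges (insert e F ∪ B) + 1 := by
    have heFB : e ∉ F ∪ B := fun h => by simpa using union_subset hF hBE h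
    rw [insert_union, ← numCompOfEdges_erase_of_isBridge (mem_insert_self _ _), erase_insert heFB]
    refine h.anti (fromEdgeSet_mono ?_)
    exact_mod_cast insert_subset he ((union_subset hF hBE).trans (erase_subset _ _))
  rw [hk, pow_succ]
  ring

lemma contractZ_eq_mul_of_isBridge (he : e ∈ E \ F) (hF : F ⊆ E)
    (h : (fromEdgeSet ↑E).IsBridge e) :
    contractZ q v E F = (q + v e) * contractZ q v E (insert e F) := by
  rw [contractZ_eq_erase_add he,
    contractZ_erase_of_isBridge (mem_sdiff.mp he).1 (subset_erase.mpr ⟨hF, (mem_sdiff.mp he).2⟩) h]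
  ring

lemma contractZ_eq_prod_mul_of_isBridge {R : Finset (Sym2 V)} (hR : R ⊆ E \ F) (hF : F ⊆ E)
    (h : ∀ e ∈ R, (fromEdgeSet ↑E).IsBridge e) :
    contractZ q v E F = (∏ e ∈ R, (q + v e)) * contractZ q v E (F ∪ R) := by
  induction R using Finset.induction_on generalizing F with
  | empty => simp
  | insert a R ha ih =>
    obtain ⟨haE, haF⟩ := mem_sdiff.mp (hR (mem_insert_self a R))
    have hR' : R ⊆ E \ insert a F := fun r hr => by
      have := hR (mem_insert_of_mem hr)
      grind
    rw [contractZ_eq_mul_of_isBridge (hR (mem_insert_self a R)) hF (h a (mem_insert_self a R)),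
      ih hR' (insert_subset haE hF) (fun e he => h e (mem_insert_of_mem he)), prod_insert ha,
      insert_union, union_insert]
    ring

lemma contractZ_erase_comm (hq : q ≠ 0) {t t' : Sym2 V} (ht : t ∈ E \ F) (ht' : t' ∈ E \ F)
    (htt' : t ≠ t') (hF : F ⊆ E) (h : (fromEdgeSet ↑(E.erase t)).IsBridge t')
    (h' : (fromEdgeSet ↑(E.erase t')).IsBridge t) :
    contractZ q v (E.erase t) (insert t' F) = contractZ q v (E.erase t') (insert t F) := by
  obtain ⟨htE, htF⟩ := mem_sdiff.mp ht
  obtain ⟨ht'E, ht'F⟩ := mem_sdiff.mp ht'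
  -- multiplied by `q`, both sides become `Z(E - t - t', F)`
  refine mul_left_cancel₀ hq ?_
  rw [← contractZ_erase_of_isBridge (mem_erase.mpr ⟨htt'.symm, ht'E⟩) ?_ h,
    ← contractZ_erase_of_isBridge (mem_erase.mpr ⟨htt', htE⟩) ?_ h', erase_right_comm]
  all_goals grind

lemma contractZ_series (hT : T ⊆ E \ F) (hF : F ⊆ E) (hs : IsSeriesSet E T) {Y : ℝ}
    (hY : ∀ t ∈ T, contractZ q v (E.erase t) (F ∪ T.erase t) = Y) :
    q * contractZ q v E F = q * (∏ t ∈ T, v t) * contractZ q v E (F ∪ T) +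
      ((∏ t ∈ T, (q + v t)) - ∏ t ∈ T, v t) * Y := by
  induction T using Finset.induction_on generalizing F with
  | empty => simp
  | insert t T ht ih =>
    have htEF := hT (mem_insert_self t T)
    obtain ⟨htE, htF⟩ := mem_sdiff.mp htEF
    have hdel : contractZ q v (E.erase t) F = (∏ t' ∈ T, (q + v t')) * Y := by
      rw [contractZ_eq_prod_mul_of_isBridge (R := T) ?_ ?_
        (fun t' ht' => hs t (mem_insert_self t T) t' (mem_insert_of_mem ht') ?_),
        ← hY t (mem_insert_self t T), erase_insert ht]
      all_goals grind
    have hcon := ih (F := insert t F) (by grind) (insert_subset htE hF)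
      (fun a ha b hb => hs a (mem_insert_of_mem ha) b (mem_insert_of_mem hb))
      (fun t' ht' => by
        rw [← hY t' (mem_insert_of_mem ht'), erase_insert_of_ne (by grind), union_insert,
          insert_union])
    rw [insert_union, ← union_insert] at hcon
    rw [contractZ_eq_erase_add htEF, hdel, prod_insert ht, prod_insert ht]
    linear_combination v t * hcon

lemma contractZ_series_insert (hq : q ≠ 0) (he : e ∈ E \ F) (hF : F ⊆ E) {B : Finset (Sym2 V)}
    (hB : B ⊆ (E.erase e) \ F) (hnB : ∀ b ∈ B, ¬(fromEdgeSet ↑E).IsBridge b)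
    (hBbr : ∀ b ∈ B, (fromEdgeSet ↑(E.erase e)).IsBridge b) :
    q * contractZ q v E F = q * (∏ t ∈ insert e B, v t) * contractZ q v E (F ∪ insert e B) +
      ((∏ t ∈ insert e B, (q + v t)) - ∏ t ∈ insert e B, v t) *
        contractZ q v (E.erase e) (F ∪ B) := by
  have heB : e ∉ B := fun h => by simpa using hB h
  have hBE : B ⊆ E := hB.trans (sdiff_subset.trans (erase_subset _ _))
  have hBF : Disjoint B F := disjoint_of_subset_left hB sdiff_disjoint
  have hs := isSeriesSet_insert (hB.trans sdiff_subset) hnB hBbr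
  refine contractZ_series (insert_subset he (subset_sdiff.mpr ⟨hBE, hBF⟩)) hF hs fun t ht => ?_
  rcases mem_insert.mp ht with rfl | htB
  · rw [erase_insert heB]
  have hte : t ≠ e := fun h => heB (h ▸ htB)
  rw [erase_insert_of_ne hte.symm, union_insert,
    contractZ_erase_comm hq (F := F ∪ B.erase t)
      (by simp [hBE htB, disjoint_left.mp hBF htB]) (by simp [mem_sdiff.mp he, heB]) hte
      (union_subset hF ((erase_subset _ _).trans hBE))
      (hs t ht e (mem_insert_self e B) hte) (hs e (mem_insert_self e B) t ht hte.symm),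
    ← union_insert, insert_erase htB]

theorem contractZ_pos_of_forall_not_isBridge (hq : q < 0) (hF : F ⊆ E)
    (hv : ∀ e ∈ E \ F, -q / 2 ≤ v e) (hB : ∀ e ∈ E \ F, ¬(fromEdgeSet ↑E).IsBridge e) :
    0 < (-1) ^ numCompOfEdges E * contractZ q v E F := by
  induction hn : #(E \ F) using Nat.strong_induction_on generalizing E F with | _ n ih =>
  subst hn
  rcases (E \ F).eq_empty_or_nonempty with hEF | ⟨e, he⟩
  · obtain rfl : F = E := hF.antisymm (sdiff_eq_empty_iff_subset.mp hEF)
    rw [contractZ_self, ← mul_pow]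
    exact pow_pos (by linarith) _
  classical
  -- the free edges in series with `e`
  set B := ((E.erase e) \ F).filter fun b => (fromEdgeSet ↑(E.erase e)).IsBridge b
  have hBsub : B ⊆ (E.erase e) \ F := filter_subset _ _
  have hid := contractZ_series_insert (v := v) hq.ne he hF hBsub
    (fun b hb => hB b (by grind)) (fun b hb => (mem_filter.mp hb).2)
  have hX : 0 < (-1) ^ numCompOfEdges E * contractZ q v E (F ∪ insert e B) := by
    refine ih _ ?_ (union_subset hF (insert_subset (mem_sdiff.mp he).1 (by grind)))
      (fun f hf => hv f (by grind)) (fun f hf => hB f (by grind)) rfl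
    exact (card_le_card (by grind)).trans_lt (card_erase_lt_of_mem he)
  have hY : 0 < (-1) ^ numCompOfEdges E * contractZ q v (E.erase e) (F ∪ B) := by
    rw [← numCompOfEdges_erase_of_not_isBridge (hB e he)]
    refine ih _ ?_ (union_subset (by grind) (hBsub.trans sdiff_subset))
      (fun f hf => hv f (by grind)) (fun f hf hfb => ?_) rfl
    · exact (card_le_card (by grind)).trans_lt (card_erase_lt_of_mem he)
    · exact (mem_sdiff.mp hf).2 (mem_union_right _ (mem_filter.mpr ⟨by grind, hfb⟩))
  have hP : 0 < ∏ t ∈ insert e B, v t :=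
    prod_pos fun t ht => by linarith [hv t (by grind)]
  have hQ : ∏ t ∈ insert e B, (q + v t) ≤ ∏ t ∈ insert e B, v t :=
    prod_le_prod_of_abs_le fun t ht => abs_le.mpr ⟨by linarith [hv t (by grind)], by linarith⟩
  have hXterm := mul_neg_of_neg_of_pos (mul_neg_of_neg_of_pos hq hP) hX
  have hYterm := mul_nonpos_of_nonpos_of_nonneg (sub_nonpos.mpr hQ) hY.le
  refine pos_of_mul_neg_right ?_ hq.le
  linear_combination (-1) ^ numCompOfEdges E * hid + hXterm + hYterm

theorem contractZ_sign (hq : q < 0) (hF : F ⊆ E) (hv : ∀ e ∈ E \ F, -q / 2 ≤ v e)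
    (hbr : ∀ e ∈ E \ F, (fromEdgeSet ↑E).IsBridge e → -q ≤ v e) :
    0 ≤ (-1) ^ numCompOfEdges E * contractZ q v E F ∧
      (0 < (-1) ^ numCompOfEdges E * contractZ q v E F ↔
        ∀ e ∈ E \ F, (fromEdgeSet ↑E).IsBridge e → -q < v e) := by
  induction hn : #(E \ F) using Nat.strong_induction_on generalizing E F with | _ n ih =>
  subst hn
  by_cases hB : ∃ f ∈ E \ F, (fromEdgeSet ↑E).IsBridge f
  · obtain ⟨f, hf, hfb⟩ := hB
    have hlt : #(E \ insert f F) < #(E \ F) := by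
      rw [sdiff_insert]; exact card_erase_lt_of_mem hf
    obtain ⟨h0, hpos⟩ := ih _ hlt (insert_subset (mem_sdiff.mp hf).1 hF)
      (fun e he => hv e (by grind)) (fun e he => hbr e (by grind)) rfl
    have hqf : 0 ≤ q + v f := by linarith [hbr f hf hfb]
    rw [contractZ_eq_mul_of_isBridge hf hF hfb, mul_left_comm]
    refine ⟨mul_nonneg hqf h0, ?_⟩
    rw [mul_pos_iff, or_iff_left (fun h => h.1.not_ge hqf), hpos]
    constructor
    · rintro ⟨hf', h⟩ e he hb
      by_cases hef : e = f
      · subst hef; linarith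
      · exact h e (by grind) hb
    · exact fun h => ⟨by linarith [h f hf hfb], fun e he hb => h e (by grind) hb⟩
  · push Not at hB
    have h := contractZ_pos_of_forall_not_isBridge hq hF hv hB
    exact ⟨h.le, iff_of_true h fun e he hb => absurd hb (hB e he)⟩

end

/-- **(Dong)**  Let `G` be a finite simple graph with `c` components, fix `q < 0`, and
suppose `v_e ≥ -q` for every bridge `e` and `v_e ≥ -q/2` for every non-bridge edge.
Then `(-1)^c Z_G(q,v) ≥ 0`, with strict inequality if and only if every bridge `e`
has `v_e > -q`. -/
theorem tutteZ_sign_neg_q_dual {V : Type*} [Fintype V] [DecidableEq V]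
    (G : SimpleGraph V) [DecidableRel G.Adj]
    (c : ℕ) (hc : c = Nat.card G.ConnectedComponent)
    (q : ℝ) (hq : q < 0) (v : Sym2 V → ℝ)
    (hbridge : ∀ e ∈ G.edgeFinset, G.IsBridge e → -q ≤ v e)
    (hnonbridge : ∀ e ∈ G.edgeFinset, ¬G.IsBridge e → -q / 2 ≤ v e) :
    0 ≤ (-1 : ℝ) ^ c * tutteZ G q v ∧
    (0 < (-1 : ℝ) ^ c * tutteZ G q v ↔
      ∀ e ∈ G.edgeFinset, G.IsBridge e → -q < v e) := by
  have hG : SimpleGraph.fromEdgeSet (G.edgeFinset : Set (Sym2 V)) = G := by simp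
  have hv (e) (he : e ∈ G.edgeFinset) : -q / 2 ≤ v e := by
    by_cases h : G.IsBridge e
    · linarith [hbridge e he h]
    · exact hnonbridge e he h
  have := contractZ_sign hq (empty_subset G.edgeFinset) (v := v) (by simpa using hv)
    (by simpa [hG] using hbridge)
  rwa [sdiff_empty, hG, numCompOfEdges, hG, ← hc, ← tutteZ_eq_contractZ] at this
end

section
/- Let G = (V,E) be a finite simple 2-connected graph that has at most one vertex of degree 2. Then there exists an edge e = {a,b} ∈ E such that both the edge-deleted graph G∖e and the contracted graph G/e are 2-connected, where G/e is the simple graph on vertex set V∖{b} in which distinct vertices x,y are adjacent if and only if x and y are adjacent in G, or x = a and y is adjacent to b in G, or y = a and x is adjacent to b in G. -/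
/-- A graph is 2-connected if it has at least 3 vertices and remains connected after
deleting any single vertex. -/
def TwoConnectedGraph {V : Type*} (G : SimpleGraph V) : Prop :=
  3 ≤ Nat.card V ∧ ∀ u : V, (G.induce {x : V | x ≠ u}).Connected

/-- The contraction `G/e` of the edge `e = {a,b}`: the simple graph on `V ∖ {b}` where
distinct `x, y` are adjacent iff they are adjacent in `G`, or `x = a` and `y` is
adjacent to `b` in `G`, or `y = a` and `x` is adjacent to `b` in `G`. -/
def contractEdge {V : Type*} (G : SimpleGraph V) (a b : V) :
    SimpleGraph {x : V // x ≠ b} where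
  Adj x y := x ≠ y ∧ (G.Adj x y ∨ ((x : V) = a ∧ G.Adj y b) ∨ ((y : V) = a ∧ G.Adj x b))
  symm := ⟨by
    rintro x y ⟨h1, h2⟩
    refine ⟨h1.symm, ?_⟩
    rcases h2 with h | ⟨hx, hy⟩ | ⟨hy, hx⟩
    · exact Or.inl h.symm
    · exact Or.inr (Or.inr ⟨hx, hy⟩)
    · exact Or.inr (Or.inl ⟨hy, hx⟩)⟩
  loopless := ⟨fun x h => h.1 rfl⟩

/-!
If `G` is 3-connected, any edge `ab` with `deg a ≥ 3` works. Otherwise two vertices `x, y` cut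
a nonempty vertex set `B` (a fragment) off from the nonempty rest of the graph. Choose `B`
inclusion-minimal among the fragments without vertices of degree 2; a vertex of `B` has degree
at least 3, hence a neighbour in `B`, giving an edge `ab` inside `B`. If `G - a - b`, or
`G - ab - u` for some vertex `u`, were disconnected, the intersection of `B` with a suitable
component would be a smaller such fragment, cut off by `{a, b}`, `{a, u}` or `{a, x}`.
Finally `G - ab` and `G / ab` are 2-connected as soon as `G - a - b` is connected and `a, b`
stay linked in every `G - ab - u`.
-/

namespace SimpleGraph

variable {V W : Type*} {G : SimpleGraph V} {s t : Set V} {x y z a b u : V}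

def ReachableIn (G : SimpleGraph V) (s : Set V) (x y : V) : Prop :=
  ∃ w : G.Walk x y, ∀ z ∈ w.support, z ∈ s

namespace ReachableIn

theorem right_mem (h : G.ReachableIn s x y) : y ∈ s :=
  let ⟨w, hw⟩ := h; hw y w.end_mem_support

theorem refl (hx : x ∈ s) : G.ReachableIn s x x :=
  ⟨.nil, by simpa using hx⟩

theorem symm (h : G.ReachableIn s x y) : G.ReachableIn s y x :=
  let ⟨w, hw⟩ := h; ⟨w.reverse, by simpa using hw⟩

theorem trans (h : G.ReachableIn s x y) (h' : G.ReachableIn s y z) : G.ReachableIn s x z := by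
  obtain ⟨w, hw⟩ := h
  obtain ⟨w', hw'⟩ := h'
  refine ⟨w.append w', fun u hu => ?_⟩
  rcases Walk.mem_support_append_iff w w' |>.mp hu with hu | hu
  exacts [hw u hu, hw' u hu]

theorem of_adj (h : G.Adj x y) (hx : x ∈ s) (hy : y ∈ s) : G.ReachableIn s x y :=
  ⟨.cons h .nil, by simp [hx, hy]⟩

theorem mono (hst : s ⊆ t) (h : G.ReachableIn s x y) : G.ReachableIn t x y :=
  let ⟨w, hw⟩ := h; ⟨w, fun u hu => hst (hw u hu)⟩

theorem map {H : SimpleGraph W} {t : Set W} (f : V → W) (hs : ∀ z ∈ s, f z ∈ t)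
    (hf : ∀ c ∈ s, ∀ d ∈ s, G.Adj c d → H.ReachableIn t (f c) (f d))
    (h : G.ReachableIn s x y) : H.ReachableIn t (f x) (f y) := by
  obtain ⟨w, hw⟩ := h
  induction w with
  | nil => exact refl (hs _ (hw _ (by simp)))
  | cons hadj w ih =>
    exact (hf _ (hw _ (by simp)) _ (hw _ (by simp)) hadj).trans
      (ih fun u hu => hw u (by simp [hu]))

theorem map_of_adj {H : SimpleGraph W} {t : Set W} (f : V → W)
    (hs : ∀ z ∈ s, f z ∈ t) (hf : ∀ ⦃c d⦄, G.Adj c d → f c = f d ∨ H.Adj (f c) (f d))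
    (h : G.ReachableIn s x y) : H.ReachableIn t (f x) (f y) := by
  refine h.map f hs fun c hc d hd hcd => ?_
  rcases hf hcd with he | hadj
  · rw [he]
    exact refl (hs d hd)
  · exact of_adj hadj (hs c hc) (hs d hd)

theorem exists_adj_notMem (h : G.ReachableIn t x y) (hx : x ∈ s) (hy : y ∉ s) :
    ∃ c d, G.ReachableIn s x c ∧ G.Adj c d ∧ d ∈ t ∧ d ∉ s := by
  obtain ⟨w, hw⟩ := h
  induction w with
  | nil => exact absurd hx hy
  | @cons x c y hadj w ih =>
    by_cases hc : c ∈ s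
    · obtain ⟨c', d, hc', hcd, hdt, hds⟩ := ih hc hy (fun u hu => hw u (by simp [hu]))
      exact ⟨c', d, (of_adj hadj hx hc).trans hc', hcd, hdt, hds⟩
    · exact ⟨x, c, refl hx, hadj, hw c (by simp), hc⟩

theorem deleteEdges (ha : a ∉ s) (h : G.ReachableIn s x y) :
    (G.deleteEdges {s(a, b)}).ReachableIn s x y := by
  refine h.map id (fun _ h => h) fun c hc d hd hcd => of_adj ?_ hc hd
  simp only [deleteEdges_adj, Set.mem_singleton_iff, Sym2.eq_iff]
  refine ⟨hcd, ?_⟩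
  rintro (⟨rfl, -⟩ | ⟨-, rfl⟩) <;> contradiction

theorem deleteEdges_of_reachableIn (h : G.ReachableIn s x y)
    (hab : (G.deleteEdges {s(a, b)}).ReachableIn s a b) :
    (G.deleteEdges {s(a, b)}).ReachableIn s x y := by
  refine h.map id (fun _ h => h) fun c hc d hd hcd => ?_
  by_cases he : s(c, d) = s(a, b)
  · rcases Sym2.eq_iff.mp he with ⟨rfl, rfl⟩ | ⟨rfl, rfl⟩
    exacts [hab, hab.symm]
  · exact of_adj (deleteEdges_adj.mpr ⟨hcd, he⟩) hc hd

end ReachableIn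

theorem reachableIn_of_induce_walk : ∀ {p q : s}, (G.induce s).Walk p q → G.ReachableIn s p q
  | _, _, .nil => .refl (Subtype.prop _)
  | _, _, .cons h w =>
    (ReachableIn.of_adj (induce_adj.mp h) (Subtype.prop _) (Subtype.prop _)).trans
      (reachableIn_of_induce_walk w)

theorem preconnected_induce_iff_reachableIn :
    (G.induce s).Preconnected ↔ ∀ x ∈ s, ∀ y ∈ s, G.ReachableIn s x y := by
  refine ⟨fun h x hx y hy => ?_, fun h ⟨x, hx⟩ ⟨y, hy⟩ => ?_⟩
  · exact reachableIn_of_induce_walk (h ⟨x, hx⟩ ⟨y, hy⟩).some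
  · obtain ⟨w, hw⟩ := h x hx y hy
    exact ⟨w.induce s hw⟩

theorem Preconnected.reachableIn (h : (G.induce s).Preconnected) (hx : x ∈ s) (hy : y ∈ s) :
    G.ReachableIn s x y :=
  preconnected_induce_iff_reachableIn.mp h x hx y hy

def IsSeparatedBy (G : SimpleGraph V) (C T : Set V) : Prop :=
  ∀ ⦃c w⦄, c ∈ C → G.Adj c w → w ∈ C ∪ T

variable {A B C D T T' : Set V}

theorem IsSeparatedBy.mono (h : G.IsSeparatedBy C T) (hT : T ⊆ T') : G.IsSeparatedBy C T' :=
  fun _ _ hc hcw => Set.union_subset_union_right C hT (h hc hcw)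

theorem IsSeparatedBy.inter {T'' : Set V} (h : G.IsSeparatedBy C T) (h' : G.IsSeparatedBy D T')
    (hT : (C ∪ T) ∩ (D ∪ T') ⊆ C ∩ D ∪ T'') : G.IsSeparatedBy (C ∩ D) T'' :=
  fun _ _ hc hcw => hT ⟨h hc.1 hcw, h' hc.2 hcw⟩

theorem IsSeparatedBy.of_deleteEdges (h : (G.deleteEdges {s(a, b)}).IsSeparatedBy C T) :
    G.IsSeparatedBy C (T ∪ {a, b}) := by
  intro c w hc hcw
  by_cases he : s(c, w) = s(a, b)
  · rcases Sym2.eq_iff.mp he with ⟨-, rfl⟩ | ⟨-, rfl⟩ <;> simp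
  · rcases h hc (deleteEdges_adj.mpr ⟨hcw, he⟩) with hw | hw <;> simp [hw]

theorem isSeparatedBy_setOf_reachableIn : G.IsSeparatedBy {z | G.ReachableIn s x z} sᶜ := by
  intro c w hc hcw
  by_cases hw : w ∈ s
  · exact Or.inl (ReachableIn.trans hc (.of_adj hcw hc.right_mem hw))
  · exact Or.inr hw

structure IsFragment (G : SimpleGraph V) (C : Set V) (x y : V) : Prop where
  nonempty : C.Nonempty
  ne : x ≠ y
  left_notMem : x ∉ C
  right_notMem : y ∉ C
  isSeparatedBy : G.IsSeparatedBy C {x, y}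
  exists_notMem : ∃ z, z ∉ C ∧ z ≠ x ∧ z ≠ y

theorem IsFragment.symm (h : G.IsFragment C x y) : G.IsFragment C y x where
  nonempty := h.nonempty
  ne := h.ne.symm
  left_notMem := h.right_notMem
  right_notMem := h.left_notMem
  isSeparatedBy := h.isSeparatedBy.mono (Set.pair_comm x y).subset
  exists_notMem := h.exists_notMem.imp fun _ ⟨hC, hx, hy⟩ => ⟨hC, hy, hx⟩

theorem IsFragment.reachableIn_compl_of_ne (hconn : ∀ v, (G.induce {v}ᶜ).Preconnected)
    (hC : G.IsFragment C x y) (hz : z ∉ C) (hzx : z ≠ x) (hzy : z ≠ y) :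
    G.ReachableIn Cᶜ z x := by
  obtain ⟨b, hb⟩ := hC.nonempty
  have hzb : G.ReachableIn {y}ᶜ z b :=
    (hconn y).reachableIn hzy (fun h => hC.right_notMem (h ▸ hb))
  -- a walk from `z` into `C` avoiding `y` has to enter `C` through `x`
  obtain ⟨c, d, hzc, hcd, hdy, hd⟩ :=
    hzb.exists_adj_notMem (s := {w | w ∉ C ∧ w ≠ x ∧ w ≠ y}) ⟨hz, hzx, hzy⟩ fun h => h.1 hb
  obtain ⟨hcC, hcx, hcy⟩ := hzc.right_mem
  obtain rfl : d = x := by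
    by_contra hdx
    have hdC : d ∈ C := by
      by_contra hdC
      exact hd ⟨hdC, hdx, hdy⟩
    rcases hC.isSeparatedBy hdC hcd.symm with h | rfl | rfl
    exacts [hcC h, hcx rfl, hcy rfl]
  exact (hzc.mono fun w hw => hw.1).trans (.of_adj hcd hcC hC.left_notMem)

theorem IsFragment.reachableIn_compl (hconn : ∀ v, (G.induce {v}ᶜ).Preconnected)
    (hC : G.IsFragment C x y) (hz : z ∉ C) : G.ReachableIn Cᶜ z x := by
  obtain ⟨o, ho, hox, hoy⟩ := hC.exists_notMem
  by_cases hzx : z = x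
  · exact hzx ▸ .refl hz
  by_cases hzy : z = y
  · subst hzy
    exact (hC.symm.reachableIn_compl_of_ne hconn ho hoy hox).symm.trans
      (hC.reachableIn_compl_of_ne hconn ho hox hoy)
  exact hC.reachableIn_compl_of_ne hconn hz hzx hzy

theorem exists_isFragment_subset (hA : Aᶜ.Subsingleton) (hxy : x ≠ y)
    (h : ¬(G.induce {x, y}ᶜ).Preconnected) : ∃ C ⊆ A, G.IsFragment C x y := by
  simp only [preconnected_induce_iff_reachableIn, not_forall] at h
  obtain ⟨c, hc, d, hd, hcd⟩ := h
  have hfrag : ∀ {c d}, c ∈ ({x, y}ᶜ : Set V) → d ∈ ({x, y}ᶜ : Set V) →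
      ¬G.ReachableIn {x, y}ᶜ c d → G.IsFragment {z | G.ReachableIn {x, y}ᶜ c z} x y := by
    intro c d hc hd hcd
    refine ⟨⟨c, .refl hc⟩, hxy, fun h => h.right_mem (by simp), fun h => h.right_mem (by simp),
      ?_, d, hcd, fun h => hd (Or.inl h), fun h => hd (Or.inr h)⟩
    simpa using isSeparatedBy_setOf_reachableIn (G := G) (s := {x, y}ᶜ) (x := c)
  -- at most one vertex lies outside `A`, so one of the two components avoids it
  by_cases hcA : {z | G.ReachableIn {x, y}ᶜ c z} ⊆ A
  · exact ⟨_, hcA, hfrag hc hd hcd⟩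
  · refine ⟨_, fun z hz => ?_, hfrag hd hc fun h => hcd h.symm⟩
    obtain ⟨w, hw, hwA⟩ := Set.not_subset.mp hcA
    by_contra hzA
    exact hcd (hw.trans ((hA hwA hzA) ▸ hz).symm)

theorem mem_of_minimal_fragment (hB : Minimal (fun C => C ⊆ A ∧ ∃ x y, G.IsFragment C x y) B)
    (hDB : D ⊆ B) (hD : D.Nonempty) {q : V} (hq : q ∉ D) (hsep : G.IsSeparatedBy D {a, q})
    (ha : a ∈ B) : a ∈ D := by
  by_contra haD
  obtain ⟨-, x, y, hBxy⟩ := hB.prop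
  have hxD : x ∉ D := fun h => hBxy.left_notMem (hDB h)
  have hyD : y ∉ D := fun h => hBxy.right_notMem (hDB h)
  have hax : a ≠ x := fun h => hBxy.left_notMem (h ▸ ha)
  have hay : a ≠ y := fun h => hBxy.right_notMem (h ▸ ha)
  suffices ∃ p q, G.IsFragment D p q from haD (hB.2 ⟨hDB.trans hB.prop.1, this⟩ hDB ha)
  by_cases hqa : q = a
  · subst hqa
    exact ⟨q, x, hD, hax, haD, hxD, hsep.mono (by simp), y, hyD, hay.symm, hBxy.ne.symm⟩
  by_cases hxq : x = q
  · subst hxq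
    exact ⟨a, x, hD, hax, haD, hxD, hsep, y, hyD, hay.symm, hBxy.ne.symm⟩
  · exact ⟨a, q, hD, Ne.symm hqa, haD, hq, hsep, x, hxD, hax.symm, hxq⟩

theorem preconnected_induce_compl_pair_of_minimal (hconn : ∀ v, (G.induce {v}ᶜ).Preconnected)
    (hB : Minimal (fun C => C ⊆ A ∧ ∃ x y, G.IsFragment C x y) B) (ha : a ∈ B) (hb : b ∈ B) :
    (G.induce {a, b}ᶜ).Preconnected := by
  obtain ⟨-, x, y, hBxy⟩ := hB.prop
  have hsub : Bᶜ ⊆ {a, b}ᶜ := Set.compl_subset_compl.mpr (Set.pair_subset ha hb)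
  have hreach : ∀ c ∈ ({a, b}ᶜ : Set V), G.ReachableIn {a, b}ᶜ c x := by
    intro c hc
    by_cases hcB : c ∉ B
    · exact (hBxy.reachableIn_compl hconn hcB).mono hsub
    by_contra hcx
    have hDB : {z | G.ReachableIn {a, b}ᶜ c z} ⊆ B := fun z hz => by
      by_contra hzB
      exact hcx (ReachableIn.trans hz ((hBxy.reachableIn_compl hconn hzB).mono hsub))
    have hsep := isSeparatedBy_setOf_reachableIn (G := G) (s := {a, b}ᶜ) (x := c)
    rw [compl_compl] at hsep
    have haD := mem_of_minimal_fragment hB hDB ⟨c, .refl hc⟩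
      (fun h => h.right_mem (Set.mem_insert_of_mem a rfl)) hsep ha
    exact haD.right_mem (Set.mem_insert a _)
  rw [preconnected_induce_iff_reachableIn]
  exact fun p hp q hq => (hreach p hp).trans (hreach q hq).symm

/-- The component of `b` in `G - ab - u` meets `B` in a set cut off by `{a, q}`, so by
minimality it contains `a`. -/
theorem reachableIn_deleteEdges_of_minimal_of_cover
    (hB : Minimal (fun C => C ⊆ A ∧ ∃ x y, G.IsFragment C x y) B) (hBxy : G.IsFragment B x y)
    (ha : a ∈ B) (hb : b ∈ B) (hub : u ≠ b) {q : V} (hq : q ∉ B ∨ q = u)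
    (hcover : ∀ w ∈ B ∪ {x, y}, (G.deleteEdges {s(a, b)}).ReachableIn {u}ᶜ b w ∨ w = u →
      w ∈ B ∧ (G.deleteEdges {s(a, b)}).ReachableIn {u}ᶜ b w ∨ w = a ∨ w = q) :
    (G.deleteEdges {s(a, b)}).ReachableIn {u}ᶜ b a := by
  set P := {z | (G.deleteEdges {s(a, b)}).ReachableIn {u}ᶜ b z}
  have hbP : b ∈ P := .refl hub.symm
  have hsep : G.IsSeparatedBy (P ∩ B) {a, q} := by
    refine (isSeparatedBy_setOf_reachableIn.of_deleteEdges).inter hBxy.isSeparatedBy ?_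
    rintro w ⟨hwP, hwB⟩
    simp only [compl_compl, Set.mem_union, Set.mem_singleton_iff, Set.mem_insert_iff] at hwP
    rcases hwP with hwP | hwu | rfl | rfl
    · rcases hcover w hwB (Or.inl hwP) with h | h | h <;> simp [h]
    · rcases hcover w hwB (Or.inr hwu) with h | h | h <;> simp [h]
    · simp
    · exact Or.inl ⟨hbP, hb⟩
  have hqD : q ∉ P ∩ B := by
    rcases hq with hq | rfl
    exacts [fun h => hq h.2, fun h => h.1.right_mem rfl]
  exact (mem_of_minimal_fragment hB Set.inter_subset_right ⟨b, hbP, hb⟩ hqD hsep ha).1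

theorem reachableIn_deleteEdges_of_minimal (hconn : ∀ v, (G.induce {v}ᶜ).Preconnected)
    (hB : Minimal (fun C => C ⊆ A ∧ ∃ x y, G.IsFragment C x y) B) (ha : a ∈ B) (hb : b ∈ B)
    (hua : u ≠ a) (hub : u ≠ b) : (G.deleteEdges {s(a, b)}).ReachableIn {u}ᶜ a b := by
  obtain ⟨-, x, y, hBxy⟩ := hB.prop
  by_contra hab
  have side : ∀ {a b}, a ∈ B → b ∈ B → u ≠ b →
      ¬(G.deleteEdges {s(a, b)}).ReachableIn {u}ᶜ b x →
      ¬(G.deleteEdges {s(a, b)}).ReachableIn {u}ᶜ b y →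
      (G.deleteEdges {s(a, b)}).ReachableIn {u}ᶜ b a := by
    intro a b ha hb hub hx hy
    refine reachableIn_deleteEdges_of_minimal_of_cover hB hBxy ha hb hub (Or.inr rfl) ?_
    rintro w (hwB | rfl | rfl) (hbw | rfl)
    · exact Or.inl ⟨hwB, hbw⟩
    · exact Or.inr (Or.inr rfl)
    · exact absurd hbw hx
    · exact Or.inr (Or.inr rfl)
    · exact absurd hbw hy
    · exact Or.inr (Or.inr rfl)
  -- if `b` reaches `x` and `a` reaches `y`, then `u` separates `x` from `y`, which are linked
  -- outside `B`; hence `u ∉ B`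
  have mixed : ∀ {x y}, G.IsFragment B x y →
      (G.deleteEdges {s(a, b)}).ReachableIn {u}ᶜ b x →
      (G.deleteEdges {s(a, b)}).ReachableIn {u}ᶜ a y → False := by
    intro x y hBxy hbx hay
    have hxy : ¬(G.deleteEdges {s(a, b)}).ReachableIn {u}ᶜ x y :=
      fun h => hab (hay.trans (hbx.trans h).symm)
    have huB : u ∉ B := fun huB => hxy <|
      ((hBxy.reachableIn_compl hconn hBxy.right_notMem).symm.deleteEdges
        (Set.notMem_compl_iff.mpr ha)).mono
        (Set.compl_subset_compl.mpr (Set.singleton_subset_iff.mpr huB))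
    refine hab (reachableIn_deleteEdges_of_minimal_of_cover hB hBxy ha hb hub
      (Or.inl hBxy.left_notMem) ?_).symm
    rintro w (hwB | rfl | rfl) (hbw | rfl)
    · exact Or.inl ⟨hwB, hbw⟩
    · exact absurd hwB huB
    · exact Or.inr (Or.inr rfl)
    · exact Or.inr (Or.inr rfl)
    · exact absurd (hay.trans hbw.symm) hab
    · exact absurd rfl hay.right_mem
  by_cases hP : (G.deleteEdges {s(a, b)}).ReachableIn {u}ᶜ b x ∨
      (G.deleteEdges {s(a, b)}).ReachableIn {u}ᶜ b y
  · by_cases hQ : (G.deleteEdges {s(a, b)}).ReachableIn {u}ᶜ a x ∨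
        (G.deleteEdges {s(a, b)}).ReachableIn {u}ᶜ a y
    · rcases hP with hbx | hby <;> rcases hQ with hax | hay
      · exact hab (hax.trans hbx.symm)
      · exact mixed hBxy hbx hay
      · exact mixed hBxy.symm hby hax
      · exact hab (hay.trans hby.symm)
    · rw [not_or] at hQ
      rw [Sym2.eq_swap] at hab hQ
      exact hab (side hb ha hua hQ.1 hQ.2)
  · rw [not_or] at hP
    exact hab (side ha hb hub hP.1 hP.2).symm

theorem reachableIn_deleteEdges_of_preconnected {c : V} (h : (G.induce {a, u}ᶜ).Preconnected)
    (hab : G.Adj a b) (hac : G.Adj a c) (hcb : c ≠ b) (hua : u ≠ a) (hub : u ≠ b) (hcu : c ≠ u) :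
    (G.deleteEdges {s(a, b)}).ReachableIn {u}ᶜ a b := by
  have hcb' : G.ReachableIn {a, u}ᶜ c b :=
    h.reachableIn (by simp [hac.ne', hcu]) (by simp [hab.ne', hub.symm])
  have hac' : (G.deleteEdges {s(a, b)}).Adj a c := by simp [hac, hcb, hab.ne]
  exact (ReachableIn.of_adj hac' hua.symm hcu).trans
    ((hcb'.deleteEdges (by simp)).mono (by simp))

theorem exists_adj_ne_ne_of_three_le_degree [Fintype (G.neighborSet a)] (h : 3 ≤ G.degree a)
    (e f : V) : ∃ c, G.Adj a c ∧ c ≠ e ∧ c ≠ f := by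
  classical
  obtain ⟨c, hc, hcef⟩ := Finset.exists_mem_notMem_of_card_lt_card (s := {e, f})
    (t := G.neighborFinset a) (Finset.card_le_two.trans_lt (by rwa [card_neighborFinset_eq_degree]))
  simp only [mem_neighborFinset, Finset.mem_insert, Finset.mem_singleton, not_or] at hc hcef
  exact ⟨c, hc, hcef⟩

end SimpleGraph

open SimpleGraph

theorem exists_ne_ne_of_three_le_natCard {V : Type*} [Finite V] (h : 3 ≤ Nat.card V) (a b : V) :
    ∃ z, z ≠ a ∧ z ≠ b := by
  classical
  have := Fintype.ofFinite V
  by_contra! hab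
  have hsub : (Finset.univ : Finset V) ⊆ {a, b} := fun z _ => by
    by_cases hza : z = a
    · simp [hza]
    · simp [hab z hza]
  have := (Finset.card_le_card hsub).trans Finset.card_le_two
  rw [Finset.card_univ, ← Nat.card_eq_fintype_card] at this
  omega

namespace TwoConnectedGraph

variable {V : Type*} {G : SimpleGraph V} {a b : V}

theorem preconnected_induce_compl_singleton (h : TwoConnectedGraph G) (v : V) :
    (G.induce {v}ᶜ).Preconnected := by
  rw [Set.compl_singleton_eq]
  exact (h.2 v).preconnected

theorem exists_adj_ne [Finite V] (h : TwoConnectedGraph G) {v c : V} (hcv : c ≠ v) :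
    ∃ w, G.Adj v w ∧ w ≠ c := by
  obtain ⟨z, hzv, hzc⟩ := exists_ne_ne_of_three_le_natCard h.1 v c
  obtain ⟨v', w, hv', hv'w, hwc, -⟩ := ((h.preconnected_induce_compl_singleton c).reachableIn
    hcv.symm hzc).exists_adj_notMem (s := {v}) rfl hzv
  obtain rfl : v' = v := hv'.right_mem
  exact ⟨w, hv'w, hwc⟩

theorem two_le_degree [Fintype V] [DecidableRel G.Adj] (h : TwoConnectedGraph G) (v : V) :
    2 ≤ G.degree v := by
  obtain ⟨c, hcv, -⟩ := exists_ne_ne_of_three_le_natCard h.1 v v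
  obtain ⟨w₁, hw₁, -⟩ := h.exists_adj_ne hcv
  obtain ⟨w₂, hw₂, hne⟩ := h.exists_adj_ne hw₁.ne'
  rw [← card_neighborFinset_eq_degree]
  exact Finset.one_lt_card.mpr ⟨w₂, by simpa using hw₂, w₁, by simpa using hw₁, hne⟩

theorem exists_three_le_degree [Fintype V] [DecidableRel G.Adj] (h : TwoConnectedGraph G)
    (hdeg : ∀ u w : V, G.degree u = 2 → G.degree w = 2 → u = w) : ∃ v, 3 ≤ G.degree v := by
  obtain ⟨v⟩ : Nonempty V := (Nat.card_pos_iff.mp (by linarith [h.1])).1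
  obtain ⟨w, hwv, -⟩ := exists_ne_ne_of_three_le_natCard h.1 v v
  by_cases hv : G.degree v = 2
  · have hw : G.degree w ≠ 2 := fun hw => hwv (hdeg w v hw hv)
    exact ⟨w, by have := h.two_le_degree w; omega⟩
  · exact ⟨v, by have := h.two_le_degree v; omega⟩

theorem four_le_natCard [Fintype V] [DecidableRel G.Adj] (h : TwoConnectedGraph G)
    (hdeg : ∀ u w : V, G.degree u = 2 → G.degree w = 2 → u = w) : 4 ≤ Nat.card V := by
  obtain ⟨v, hv⟩ := h.exists_three_le_degree hdeg
  have := G.degree_lt_card_verts v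
  rw [Nat.card_eq_fintype_card]
  omega

theorem exists_adj_of_isFragment [Fintype V] [DecidableRel G.Adj] (h : TwoConnectedGraph G)
    {B : Set V} {x y : V} (hBxy : G.IsFragment B x y) (hB : ∀ v ∈ B, G.degree v ≠ 2) :
    ∃ a ∈ B, ∃ b ∈ B, G.Adj a b := by
  obtain ⟨a, ha⟩ := hBxy.nonempty
  have ha3 : 3 ≤ G.degree a := by have := h.two_le_degree a; have := hB a ha; omega
  obtain ⟨b, hab, hbx, hby⟩ := exists_adj_ne_ne_of_three_le_degree ha3 x y
  rcases hBxy.isSeparatedBy ha hab with hb | rfl | rfl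
  exacts [⟨a, ha, b, hb, hab⟩, absurd rfl hbx, absurd rfl hby]

theorem exists_adj_preconnected_and_reachableIn_deleteEdges [Fintype V] [DecidableRel G.Adj]
    (h : TwoConnectedGraph G) (hdeg : ∀ u w : V, G.degree u = 2 → G.degree w = 2 → u = w) :
    ∃ a b, G.Adj a b ∧ (G.induce {a, b}ᶜ).Preconnected ∧
      ∀ u, u ≠ a → u ≠ b → (G.deleteEdges {s(a, b)}).ReachableIn {u}ᶜ a b := by
  have hconn := h.preconnected_induce_compl_singleton
  by_cases h3 : ∀ x y : V, (G.induce {x, y}ᶜ).Preconnected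
  · obtain ⟨a, ha⟩ := h.exists_three_le_degree hdeg
    obtain ⟨b, hab, -⟩ := exists_adj_ne_ne_of_three_le_degree ha a a
    refine ⟨a, b, hab, h3 a b, fun u hua hub => ?_⟩
    obtain ⟨c, hac, hcb, hcu⟩ := exists_adj_ne_ne_of_three_le_degree ha b u
    exact reachableIn_deleteEdges_of_preconnected (h3 a u) hab hac hcb hua hub hcu
  simp only [not_forall] at h3
  obtain ⟨x, y, hxy⟩ := h3
  have hne : x ≠ y := by
    rintro rfl
    exact hxy (by rw [Set.pair_eq_singleton]; exact hconn x)
  obtain ⟨C, hCA, hC⟩ := exists_isFragment_subset (A := {v | G.degree v ≠ 2})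
    (fun v hv w hw => hdeg v w (not_not.mp hv) (not_not.mp hw)) hne hxy
  obtain ⟨B, -, hB⟩ := exists_minimal_le_of_wellFoundedLT
    (fun C => C ⊆ {v | G.degree v ≠ 2} ∧ ∃ x y, G.IsFragment C x y) C ⟨hCA, x, y, hC⟩
  obtain ⟨hBA, _, _, hBxy⟩ := hB.prop
  obtain ⟨a, ha, b, hb, hab⟩ := h.exists_adj_of_isFragment hBxy hBA
  exact ⟨a, b, hab, preconnected_induce_compl_pair_of_minimal hconn hB ha hb,
    fun u hua hub => reachableIn_deleteEdges_of_minimal hconn hB ha hb hua hub⟩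

theorem deleteEdges_of_reachableIn (h : TwoConnectedGraph G)
    (hab : ∀ u, u ≠ a → u ≠ b → (G.deleteEdges {s(a, b)}).ReachableIn {u}ᶜ a b) :
    TwoConnectedGraph (G.deleteEdges {s(a, b)}) := by
  refine ⟨h.1, fun u => ?_⟩
  have := (h.2 u).nonempty
  refine ⟨?_⟩
  rw [← Set.compl_singleton_eq, preconnected_induce_iff_reachableIn]
  intro p hp q hq
  have hpq := (h.preconnected_induce_compl_singleton u).reachableIn hp hq
  by_cases hua : u = a
  · subst hua
    exact hpq.deleteEdges (by simp)
  by_cases hub : u = b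
  · subst hub
    rw [Sym2.eq_swap]
    exact hpq.deleteEdges (by simp)
  exact hpq.deleteEdges_of_reachableIn (hab u hua hub)

end TwoConnectedGraph

section contractEdge

variable {V : Type*} [DecidableEq V] {G : SimpleGraph V} {a b : V}

def contractEdgeMap (hab : a ≠ b) (z : V) : {x : V // x ≠ b} :=
  if hz : z = b then ⟨a, hab⟩ else ⟨z, hz⟩

theorem contractEdgeMap_of_ne (hab : a ≠ b) {z : V} (hz : z ≠ b) :
    contractEdgeMap hab z = ⟨z, hz⟩ :=
  dif_neg hz

theorem contractEdgeMap_self (hab : a ≠ b) : contractEdgeMap hab b = ⟨a, hab⟩ :=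
  dif_pos rfl

theorem contractEdgeMap_eq_or_adj (hab : a ≠ b) {c d : V} (hcd : G.Adj c d) :
    contractEdgeMap hab c = contractEdgeMap hab d ∨
      (contractEdge G a b).Adj (contractEdgeMap hab c) (contractEdgeMap hab d) := by
  by_cases hc : c = b <;> by_cases hd : d = b
  · exact absurd (hc.trans hd.symm) hcd.ne
  · subst hc
    rw [contractEdgeMap_self, contractEdgeMap_of_ne hab hd]
    by_cases hda : d = a
    · exact Or.inl (Subtype.ext hda.symm)
    · exact Or.inr ⟨fun h => hda (congrArg Subtype.val h).symm, Or.inr (Or.inl ⟨rfl, hcd.symm⟩)⟩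
  · subst hd
    rw [contractEdgeMap_self, contractEdgeMap_of_ne hab hc]
    by_cases hca : c = a
    · exact Or.inl (Subtype.ext hca)
    · exact Or.inr ⟨fun h => hca (congrArg Subtype.val h), Or.inr (Or.inr ⟨rfl, hcd⟩)⟩
  · rw [contractEdgeMap_of_ne hab hc, contractEdgeMap_of_ne hab hd]
    exact Or.inr ⟨fun h => hcd.ne (congrArg Subtype.val h), Or.inl hcd⟩

theorem TwoConnectedGraph.contractEdge_of_preconnected [Finite V] (h : TwoConnectedGraph G)
    (hcard : 4 ≤ Nat.card V) (hab : G.Adj a b) (hpair : (G.induce {a, b}ᶜ).Preconnected) :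
    TwoConnectedGraph (contractEdge G a b) := by
  have := Fintype.ofFinite V
  have hcard' : Nat.card {x // x ≠ b} = Nat.card V - 1 := by
    simp [Nat.card_eq_fintype_card, Fintype.card_subtype_compl]
  refine ⟨by omega, fun u => ?_⟩
  obtain ⟨z, hzb, hzu⟩ := exists_ne_ne_of_three_le_natCard (by omega) b u.1
  have : Nonempty {x : {x // x ≠ b} | x ≠ u} :=
    ⟨⟨⟨z, hzb⟩, fun h => hzu (congrArg Subtype.val h)⟩⟩
  refine ⟨?_⟩
  rw [← Set.compl_singleton_eq, preconnected_induce_iff_reachableIn]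
  intro p hp q hq
  have hpu : p.1 ≠ u.1 := fun h => hp (Subtype.ext h)
  have hqu : q.1 ≠ u.1 := fun h => hq (Subtype.ext h)
  suffices (contractEdge G a b).ReachableIn {u}ᶜ (contractEdgeMap hab.ne p)
      (contractEdgeMap hab.ne q) by
    rwa [contractEdgeMap_of_ne hab.ne p.2, contractEdgeMap_of_ne hab.ne q.2] at this
  by_cases hua : u.1 = a
  · refine (hpair.reachableIn (by simp [hua ▸ hpu, p.2]) (by simp [hua ▸ hqu, q.2])).map_of_adj
      _ (fun z hz => ?_) fun _ _ => contractEdgeMap_eq_or_adj hab.ne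
    simp only [Set.mem_compl_iff, Set.mem_insert_iff, Set.mem_singleton_iff, not_or] at hz
    rw [contractEdgeMap_of_ne hab.ne hz.2]
    exact fun h => hz.1 ((congrArg Subtype.val h).trans hua)
  · refine ((h.preconnected_induce_compl_singleton u.1).reachableIn hpu hqu).map_of_adj
      _ (fun z hz => ?_) fun _ _ => contractEdgeMap_eq_or_adj hab.ne
    by_cases hzb : z = b
    · rw [hzb, contractEdgeMap_self]
      exact fun h => hua (congrArg Subtype.val h).symm
    · rw [contractEdgeMap_of_ne hab.ne hzb]
      exact fun h => hz (congrArg Subtype.val h)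

end contractEdge

/-- Let `G` be a finite simple 2-connected graph with at most one vertex of degree 2.
Then there is an edge `e = {a,b}` such that both `G ∖ e` and `G/e` are 2-connected. -/
theorem exists_edge_delete_contract_two_connected {V : Type*} [Fintype V] [DecidableEq V]
    (G : SimpleGraph V) [DecidableRel G.Adj]
    (h2conn : TwoConnectedGraph G)
    (hdeg : ∀ u w : V, G.degree u = 2 → G.degree w = 2 → u = w) :
    ∃ a b : V, G.Adj a b ∧
      TwoConnectedGraph (G.deleteEdges {s(a, b)}) ∧
      TwoConnectedGraph (contractEdge G a b) := by
  obtain ⟨a, b, hab, hpair, hreach⟩ :=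
    h2conn.exists_adj_preconnected_and_reachableIn_deleteEdges hdeg
  exact ⟨a, b, hab, h2conn.deleteEdges_of_reachableIn hreach,
    h2conn.contractEdge_of_preconnected (h2conn.four_le_natCard hdeg) hab hpair⟩
end
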